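/- arXiv:1701.06029 — 8 statements merged into one kernel-verified Lean document; each statement's English description precedes it below -/
import Mathlib

section
/- Let G be a finite simple graph that does not contain K_{2,3} as a minor. Then G contains K^4 as a minor if and only if G contains K^4 as a subgraph. -/
open SimpleGraph

universe u w

/-- `H` is a minor of `G`: pairwise disjoint nonempty connected branch sets, one per
vertex of `H`, with an edge of `G` between the branch sets of adjacent vertices of `H`. -/
def IsMinor {V : Type u} {W : Type w} (G : SimpleGraph V) (H : SimpleGraph W) : Prop :=
  ∃ B : W → Set V, (∀ x, (B x).Nonempty) ∧
    (∀ x, (G.induce (B x)).Connected) ∧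
    (Pairwise fun x y => Disjoint (B x) (B y)) ∧
    ∀ ⦃x y : W⦄, H.Adj x y → ∃ a ∈ B x, ∃ b ∈ B y, G.Adj a b

/-- `G` contains `H` as a subgraph. -/
def ContainsSubgraph {V : Type u} {W : Type w} (G : SimpleGraph V) (H : SimpleGraph W) : Prop :=
  ∃ f : H →g G, Function.Injective f

/-- The complete graph on four vertices. -/
def K4 : SimpleGraph (Fin 4) := completeGraph (Fin 4)

/-- The complete bipartite graph with parts of sizes 2 and 3. -/
def K23 : SimpleGraph (Fin 2 ⊕ Fin 3) := completeBipartiteGraph (Fin 2) (Fin 3)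

/-! Take a `K⁴`-model whose branch sets have minimal total size. If a branch set `B i` is not a
single vertex, no vertex of `B i` sees all three other branch sets, since that vertex alone could
replace `B i`. Then `B i` contains two disjoint, adjacent, connected pieces `C` and `D` such that
`C` sees two of the other branch sets, `B j` and `B k`, and `D` sees the third, `B l`. The sets
`B l`, `C` and `B j`, `B k`, `D` are then the branch sets of a `K_{2,3}`-model. -/

namespace SimpleGraph

variable {V : Type u} {G : SimpleGraph V}

def AdjSets (G : SimpleGraph V) (X Y : Set V) : Prop :=
  ∃ a ∈ X, ∃ b ∈ Y, G.Adj a b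

lemma AdjSets.symm {X Y : Set V} (h : G.AdjSets X Y) : G.AdjSets Y X :=
  let ⟨a, ha, b, hb, hab⟩ := h
  ⟨b, hb, a, ha, hab.symm⟩

lemma induce_singleton_connected (v : V) : (G.induce {v}).Connected := by
  rw [induce_singleton_eq_top]
  exact connected_top

lemma exists_isPath_of_induce_connected {S : Set V} (hS : (G.induce S).Connected) {a b : V}
    (ha : a ∈ S) (hb : b ∈ S) : ∃ p : G.Walk a b, p.IsPath ∧ ∀ v ∈ p.support, v ∈ S := by
  obtain ⟨q, hq⟩ := (hS ⟨a, ha⟩ ⟨b, hb⟩).exists_isPath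
  refine ⟨q.map (Embedding.induce S).toHom, hq.map Subtype.val_injective, ?_⟩
  intro v hv
  erw [Walk.support_map, List.mem_map] at hv
  obtain ⟨v, -, rfl⟩ := hv
  exact v.2

lemma Walk.exists_adj_of_notMem_of_mem {P : Set V} {t u : V} (w : G.Walk t u) (ht : t ∉ P)
    (hu : u ∈ P) :
    ∃ v, ∃ q : G.Walk t v, (∀ y ∈ q.support, y ∈ w.support ∧ y ∉ P) ∧ ∃ z ∈ P, G.Adj v z := by
  induction w with
  | nil => exact absurd hu ht
  | @cons t t' u h w ih =>
    by_cases ht' : t' ∈ P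
    · exact ⟨t, Walk.nil, by simpa using ht, t', ht', h⟩
    · obtain ⟨v, q, hq, hvP⟩ := ih ht' hu
      refine ⟨v, Walk.cons h q, ?_, hvP⟩
      intro y hy
      rw [Walk.support_cons, List.mem_cons] at hy ⊢
      rcases hy with rfl | hy
      · exact ⟨Or.inl rfl, ht⟩
      · exact ⟨Or.inr (hq y hy).1, (hq y hy).2⟩

structure IsSplit (G : SimpleGraph V) (S C D : Set V) : Prop where
  left_subset : C ⊆ S
  right_subset : D ⊆ S
  connected_left : (G.induce C).Connected
  connected_right : (G.induce D).Connected
  disjoint : Disjoint C D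
  adjSets : G.AdjSets C D

lemma exists_isSplit_of_notMem {S C : Set V} (hS : (G.induce S).Connected) (hCS : C ⊆ S)
    (hC : (G.induce C).Connected) {t : V} (htS : t ∈ S) (htC : t ∉ C) :
    ∃ D, t ∈ D ∧ G.IsSplit S C D := by
  obtain ⟨⟨c, hc⟩⟩ := hC.nonempty
  obtain ⟨w, -, hwS⟩ := exists_isPath_of_induce_connected hS htS (hCS hc)
  obtain ⟨v, q, hq, z, hz, hvz⟩ := w.exists_adj_of_notMem_of_mem htC hc
  exact ⟨{y | y ∈ q.support}, q.start_mem_support,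
    { left_subset := hCS
      right_subset := fun y hy => hwS y (hq y hy).1
      connected_left := hC
      connected_right := q.connected_induce_support
      disjoint := Set.disjoint_right.2 fun y hy => (hq y hy).2
      adjSets := ⟨z, hz, v, q.end_mem_support, hvz.symm⟩ }⟩

lemma exists_connected_subset_of_forall_exists_notMem {S : Set V}
    (hS : (G.induce S).Connected) {A : Fin 3 → Set V} (hA : ∀ m, (A m).Nonempty)
    (hAS : ∀ m, A m ⊆ S) (hAinter : ∀ v, ∃ m, v ∉ A m) :
    ∃ C ⊆ S, (G.induce C).Connected ∧ ∃ l, (A l \ C).Nonempty ∧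
      ∀ m ≠ l, (C ∩ A m).Nonempty := by
  classical
  obtain ⟨a, ha⟩ := hA 0
  obtain ⟨b, hb⟩ := hA 1
  obtain ⟨p, hp, hpS⟩ := exists_isPath_of_induce_connected hS (hAS 0 ha) (hAS 1 hb)
  -- Cut the path `p` from `A 0` to `A 1` at a vertex of `A 2`, if it has one.
  by_cases hx : ∃ x ∈ p.support, x ∈ A 2
  · obtain ⟨x, hxp, hx2⟩ := hx
    by_cases hxb : x = b
    · subst hxb
      have hx0 : x ∉ A 0 := by
        obtain ⟨m, hm⟩ := hAinter x
        fin_cases m <;> simp_all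
      refine ⟨{x}, Set.singleton_subset_iff.2 (hAS 1 hb), induce_singleton_connected x, 0,
        ⟨a, ha, fun h => hx0 (Set.mem_singleton_iff.1 h ▸ ha)⟩, ?_⟩
      intro m hm
      fin_cases m
      · exact absurd rfl hm
      · exact ⟨x, rfl, hb⟩
      · exact ⟨x, rfl, hx2⟩
    · refine ⟨{y | y ∈ (p.takeUntil x hxp).support},
        fun y hy => hpS y (p.support_takeUntil_subset_support hxp hy),
        Walk.connected_induce_support _, 1,
        ⟨b, hb, Walk.endpoint_notMem_support_takeUntil hp hxp (Ne.symm hxb)⟩, ?_⟩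
      intro m hm
      fin_cases m
      · exact ⟨a, Walk.start_mem_support _, ha⟩
      · exact absurd rfl hm
      · exact ⟨x, Walk.end_mem_support _, hx2⟩
  · push Not at hx
    obtain ⟨t, ht⟩ := hA 2
    refine ⟨{y | y ∈ p.support}, hpS, p.connected_induce_support, 2,
      ⟨t, ht, fun h => hx t h ht⟩, ?_⟩
    intro m hm
    fin_cases m
    · exact ⟨a, p.start_mem_support, ha⟩
    · exact ⟨b, p.end_mem_support, hb⟩
    · exact absurd rfl hm

theorem exists_isSplit_of_forall_exists_notMem {S : Set V}
    (hS : (G.induce S).Connected) {A : Fin 3 → Set V} (hA : ∀ m, (A m).Nonempty)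
    (hAS : ∀ m, A m ⊆ S) (hAinter : ∀ v, ∃ m, v ∉ A m) :
    ∃ C D l, G.IsSplit S C D ∧ (D ∩ A l).Nonempty ∧ ∀ m ≠ l, (C ∩ A m).Nonempty := by
  obtain ⟨C, hCS, hC, l, ⟨t, htl, htC⟩, hCA⟩ :=
    exists_connected_subset_of_forall_exists_notMem hS hA hAS hAinter
  obtain ⟨D, htD, hCD⟩ := exists_isSplit_of_notMem hS hCS hC (hAS l htl) htC
  exact ⟨C, D, l, hCD, ⟨t, htD, htl⟩, hCA⟩

end SimpleGraph

section MinorModel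

variable {V : Type u} {W : Type w} {G : SimpleGraph V} {H : SimpleGraph W}

structure IsMinorModel (G : SimpleGraph V) (H : SimpleGraph W) (B : W → Set V) : Prop where
  connected : ∀ x, (G.induce (B x)).Connected
  pairwise_disjoint : Pairwise fun x y => Disjoint (B x) (B y)
  adjSets : ∀ ⦃x y⦄, H.Adj x y → G.AdjSets (B x) (B y)

lemma IsMinorModel.nonempty {B : W → Set V} (hB : IsMinorModel G H B) (x : W) : (B x).Nonempty :=
  let ⟨v⟩ := (hB.connected x).nonempty
  ⟨v, v.2⟩

lemma isMinor_iff_exists_isMinorModel : IsMinor G H ↔ ∃ B, IsMinorModel G H B :=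
  ⟨fun ⟨B, _, hc, hd, ha⟩ => ⟨B, hc, hd, ha⟩,
    fun ⟨B, hB⟩ => ⟨B, hB.nonempty, hB.connected, hB.pairwise_disjoint, hB.adjSets⟩⟩

lemma ContainsSubgraph.isMinor (h : ContainsSubgraph G H) : IsMinor G H := by
  obtain ⟨f, hf⟩ := h
  refine isMinor_iff_exists_isMinorModel.2 ⟨fun x => {f x}, ?_⟩
  exact
    { connected := fun x => induce_singleton_connected (f x)
      pairwise_disjoint := fun x y hxy => Set.disjoint_singleton.2 (hf.ne hxy)
      adjSets := fun x y hxy => ⟨f x, rfl, f y, rfl, f.map_adj hxy⟩ }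

lemma IsMinorModel.containsSubgraph {B : W → Set V} (hB : IsMinorModel G H B) {f : W → V}
    (hf : ∀ x, B x = {f x}) : ContainsSubgraph G H := by
  refine ⟨⟨f, fun {x y} hxy => ?_⟩, fun x y hxy => ?_⟩
  · obtain ⟨a, ha, b, hb, hab⟩ := hB.adjSets hxy
    rw [hf, Set.mem_singleton_iff] at ha hb
    rwa [ha, hb] at hab
  · by_contra hne
    have h : Disjoint (B x) (B y) := hB.pairwise_disjoint hne
    rw [hf, hf, Set.disjoint_singleton] at h
    exact h hxy

lemma IsMinorModel.update [DecidableEq W] {B : W → Set V} (hB : IsMinorModel G H B) {i : W}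
    {C : Set V} (hCi : C ⊆ B i) (hC : (G.induce C).Connected)
    (hCadj : ∀ j, H.Adj i j → G.AdjSets C (B j)) : IsMinorModel G H (Function.update B i C) := by
  have hsub : ∀ x, Function.update B i C x ⊆ B x := by
    intro x
    rcases eq_or_ne x i with rfl | hx
    · simpa using hCi
    · simp [hx]
  refine ⟨fun x => ?_, fun x y hxy => (hB.pairwise_disjoint hxy).mono (hsub x) (hsub y),
    fun x y hxy => ?_⟩
  · rcases eq_or_ne x i with rfl | hx
    · rw [Function.update_self]
      exact hC
    · rw [Function.update_of_ne hx]
      exact hB.connected x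
  · rcases eq_or_ne x i with rfl | hx
    · simpa [hxy.ne'] using hCadj y hxy
    rcases eq_or_ne y i with rfl | hy
    · simpa [hx] using (hCadj x hxy.symm).symm
    · simpa [hx, hy] using hB.adjSets hxy

lemma exists_minimal_isMinorModel [Fintype W] (h : IsMinor G H) :
    ∃ B, IsMinorModel G H B ∧
      ∀ B', IsMinorModel G H B' → ∑ x, (B x).ncard ≤ ∑ x, (B' x).ncard := by
  obtain ⟨B, hB, hmin⟩ := (measure fun B : W → Set V => ∑ x, (B x).ncard).wf.has_min
    {B | IsMinorModel G H B} (isMinor_iff_exists_isMinorModel.1 h)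
  exact ⟨B, hB, fun B' hB' => not_lt.1 (hmin B' hB')⟩

lemma IsMinorModel.eq_of_subset_of_minimal [Finite V] [Fintype W] [DecidableEq W]
    {B : W → Set V} (hB : IsMinorModel G H B)
    (hmin : ∀ B', IsMinorModel G H B' → ∑ x, (B x).ncard ≤ ∑ x, (B' x).ncard) {i : W}
    {C : Set V} (hCi : C ⊆ B i) (hC : (G.induce C).Connected)
    (hCadj : ∀ j, H.Adj i j → G.AdjSets C (B j)) : C = B i := by
  have hle := hmin _ (hB.update hCi hC hCadj)
  simp only [Function.apply_update (fun _ => Set.ncard), Finset.sum_update_of_mem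
    (Finset.mem_univ i), ← Finset.add_sum_erase _ _ (Finset.mem_univ i)] at hle
  exact Set.eq_of_subset_of_ncard_le hCi (by simpa [Finset.sdiff_singleton_eq_erase] using hle)

end MinorModel

section K4

variable {V : Type u} {G : SimpleGraph V}

lemma isMinor_K23_of_isSplit {B : Fin 4 → Set V} (hB : IsMinorModel G K4 B) {i l : Fin 4}
    (hil : i ≠ l) {C D : Set V} (hCD : G.IsSplit (B i) C D)
    (hC : ∀ m, m ≠ i → m ≠ l → G.AdjSets C (B m)) (hD : G.AdjSets D (B l)) :
    IsMinor G K23 := by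
  have hothers : ∀ i l : Fin 4, i ≠ l → ∃ j k, j ≠ i ∧ j ≠ l ∧ k ≠ i ∧ k ≠ l ∧ j ≠ k := by
    decide
  obtain ⟨j, k, hji, hjl, hki, hkl, hjk⟩ := hothers i l hil
  have hBC : ∀ m ≠ i, Disjoint (B m) C := fun m hm =>
    (hB.pairwise_disjoint hm).mono_right hCD.left_subset
  have hBD : ∀ m ≠ i, Disjoint (B m) D := fun m hm =>
    (hB.pairwise_disjoint hm).mono_right hCD.right_subset
  -- The disjointness and adjacency facts among the five branch sets, for the case split below.
  have := hBC l hil.symm; have := hBC j hji; have := hBC k hki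
  have := hBD l hil.symm; have := hBD j hji; have := hBD k hki
  have := hCD.disjoint
  have : Disjoint (B l) (B j) := hB.pairwise_disjoint hjl.symm
  have : Disjoint (B l) (B k) := hB.pairwise_disjoint hkl.symm
  have : Disjoint (B j) (B k) := hB.pairwise_disjoint hjk
  have := hB.adjSets (show K4.Adj l j from hjl.symm)
  have := hB.adjSets (show K4.Adj l k from hkl.symm)
  have := hD.symm; have := hC j hji hjl; have := hC k hki hkl
  have := hCD.adjSets
  refine isMinor_iff_exists_isMinorModel.2 ⟨Sum.elim ![B l, C] ![B j, B k, D], ?_, ?_, ?_⟩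
  · rintro (a | a) <;> fin_cases a
    exacts [hB.connected l, hCD.connected_left, hB.connected j, hB.connected k,
      hCD.connected_right]
  · rintro (a | a) (b | b) hab <;> fin_cases a <;> fin_cases b <;> simp at hab ⊢ <;>
      first | assumption | exact Disjoint.symm ‹_›
  · rintro (a | a) (b | b) hab <;> simp [K23] at hab <;> fin_cases a <;> fin_cases b <;>
      simp <;> first | assumption | exact AdjSets.symm ‹_›

lemma IsMinorModel.exists_eq_singleton_of_minimal [Finite V] (hK23 : ¬ IsMinor G K23)
    {B : Fin 4 → Set V} (hB : IsMinorModel G K4 B)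
    (hmin : ∀ B', IsMinorModel G K4 B' → ∑ x, (B x).ncard ≤ ∑ x, (B' x).ncard) (i : Fin 4) :
    ∃ v, B i = {v} := by
  by_cases hv : ∃ v ∈ B i, ∀ j, K4.Adj i j → ∃ b ∈ B j, G.Adj v b
  · obtain ⟨v, hvi, hvadj⟩ := hv
    exact ⟨v, (hB.eq_of_subset_of_minimal hmin (Set.singleton_subset_iff.2 hvi)
      (induce_singleton_connected v) fun j hij => ⟨v, rfl, hvadj j hij⟩).symm⟩
  let A : Fin 3 → Set V := fun m => {v ∈ B i | ∃ b ∈ B (i.succAbove m), G.Adj v b}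
  have hA : ∀ m, (A m).Nonempty := fun m =>
    let ⟨a, ha, b, hb, hab⟩ := hB.adjSets (i.succAbove_ne m).symm
    ⟨a, ha, b, hb, hab⟩
  have hAinter : ∀ v, ∃ m, v ∉ A m := by
    by_contra! ⟨v, hvA⟩
    refine hv ⟨v, (hvA 0).1, fun j hij => ?_⟩
    obtain ⟨m, rfl⟩ := Fin.exists_succAbove_eq (Ne.symm hij)
    exact (hvA m).2
  obtain ⟨C, D, l, hCD, ⟨d, hdD, -, hd⟩, hCA⟩ :=
    exists_isSplit_of_forall_exists_notMem (hB.connected i) hA (fun m => Set.sep_subset _ _)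
      hAinter
  refine absurd (isMinor_K23_of_isSplit hB (i.succAbove_ne l).symm hCD (fun j hji hjl => ?_)
    ⟨d, hdD, hd⟩) hK23
  obtain ⟨m, rfl⟩ := Fin.exists_succAbove_eq hji
  obtain ⟨c, hcC, -, hc⟩ := hCA m (ne_of_apply_ne _ hjl)
  exact ⟨c, hcC, hc⟩

end K4

/-- A finite simple graph with no `K_{2,3}` minor contains `K⁴` as a
minor if and only if it contains `K⁴` as a subgraph. -/
theorem stmt_0 {V : Type u} [Fintype V] (G : SimpleGraph V) (hK23 : ¬ IsMinor G K23) :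
    IsMinor G K4 ↔ ContainsSubgraph G K4 := by
  refine ⟨fun h => ?_, ContainsSubgraph.isMinor⟩
  obtain ⟨B, hB, hmin⟩ := exists_minimal_isMinorModel h
  choose f hf using hB.exists_eq_singleton_of_minimal hK23 hmin
  exact hB.containsSubgraph hf
end

section
/- Let T be a finite tree with at least three vertices that is a caterpillar. Then the square T^2 of T contains a Hamilton cycle. -/
/-!
The non-leaves of a caterpillar induce a connected graph of maximum degree at most two, so a
longest path in it is a Hamiltonian path `s₁, …, s_k` (the spine); every other vertex is a leaf
hanging off a unique spine vertex. The cyclic order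

  `s₁, leaves(s₂), s₃, leaves(s₄), …, s₄, leaves(s₃), s₂, leaves(s₁)`

(out along the odd spine vertices, back along the even ones, each spine vertex followed by the
leaves of its spine neighbour on the way) lists every vertex once, and any two cyclically
consecutive vertices lie in the closed neighbourhood of a common vertex, hence are adjacent
in `T²`.
-/

open SimpleGraph

universe u w

/-- The square of a graph: join distinct vertices at distance at most 2. -/
def square {V : Type u} (G : SimpleGraph V) : SimpleGraph V where
  Adj u v := u ≠ v ∧ (G.Adj u v ∨ ∃ x, G.Adj u x ∧ G.Adj x v)
  symm := by
    constructor
    rintro u v ⟨h, h' | ⟨x, h1, h2⟩⟩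
    · exact ⟨h.symm, Or.inl h'.symm⟩
    · exact ⟨h.symm, Or.inr ⟨x, h2.symm, h1.symm⟩⟩
  loopless := ⟨fun u h => h.1 rfl⟩

/-- A caterpillar: a tree such that deleting all its leaves leaves a path
(possibly empty or a single vertex), i.e. the graph induced on the non-leaves is
connected (if nonempty), acyclic and of maximum degree at most 2. -/
def IsCaterpillar {V : Type u} (T : SimpleGraph V) : Prop :=
  T.IsTree ∧
    (T.induce {x | (T.neighborSet x).ncard ≠ 1}).Preconnected ∧
    (T.induce {x | (T.neighborSet x).ncard ≠ 1}).IsAcyclic ∧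
    ∀ x, ((T.induce {x | (T.neighborSet x).ncard ≠ 1}).neighborSet x).ncard ≤ 2

lemma List.IsChain.and {α : Type*} {R S : α → α → Prop} {l : List α} (hR : l.IsChain R)
    (hS : l.IsChain S) : l.IsChain fun x y => R x y ∧ S x y :=
  List.isChain_iff_forall_rel_of_append_cons_cons.mpr fun _ _ _ _ h =>
    ⟨List.isChain_iff_forall_rel_of_append_cons_cons.mp hR h,
      List.isChain_iff_forall_rel_of_append_cons_cons.mp hS h⟩

lemma List.Nodup.isChain_ne_append_head {α : Type*} {a : α} {l : List α}
    (hnd : (a :: l).Nodup) (hl : l ≠ []) : (a :: l ++ [a]).IsChain (· ≠ ·) := by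
  refine List.Pairwise.isChain hnd |>.append (List.isChain_singleton a) fun x hx y hy => ?_
  rw [List.getLast?_cons, List.getLast?_eq_some_getLast hl] at hx
  simp only [Option.getD_some, Option.mem_def, Option.some.injEq, List.head?_cons] at hx hy
  subst hx hy
  exact fun h => (List.nodup_cons.mp hnd).1 (h ▸ List.getLast_mem hl)

namespace SimpleGraph

variable {V : Type u} {G : SimpleGraph V}

lemma isHamiltonian_of_isChain_reflGen [Fintype V] [DecidableEq V] (h3 : 3 ≤ Fintype.card V)
    {a : V} {l : List V} (hnd : (a :: l).Nodup) (hcover : ∀ v, v ∈ a :: l)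
    (hchain : (a :: l ++ [a]).IsChain (Relation.ReflGen G.Adj)) : G.IsHamiltonian := by
  intro _
  cases l with
  | nil =>
    have : Fintype.card V ≤ 1 := Fintype.card_le_one_iff.mpr fun x y => by
      simp only [List.mem_singleton] at hcover
      rw [hcover x, hcover y]
    omega
  | cons b l =>
  have hadj : (a :: b :: l ++ [a]).IsChain G.Adj :=
    (hchain.and (hnd.isChain_ne_append_head (List.cons_ne_nil b l))).imp
      fun x y ⟨hxy, hne⟩ => ((Relation.reflGen_iff _ _ _).mp hxy).resolve_left hne.symm
  let q : G.Walk b a := (Walk.ofSupport (b :: l ++ [a]) (by simp) hadj.of_cons).copy rfl (by simp)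
  have hq : q.support = b :: l ++ [a] :=
    (Walk.support_copy _ _ _).trans (Walk.support_ofSupport _ _)
  have hqham : q.IsHamiltonian := by
    refine Walk.IsPath.isHamiltonian_of_mem (Walk.IsPath.mk' ?_) fun v => ?_
    · rw [hq]; exact (List.perm_append_singleton a (b :: l)).nodup_iff.mpr hnd
    · rw [hq]; exact (List.perm_append_singleton a (b :: l)).mem_iff.mpr (hcover v)
  refine ⟨a, Walk.cons hadj.rel q, Walk.isHamiltonianCycle_isCycle_and_isHamiltonian_tail.mpr
    ⟨Walk.isCycle_iff_isPath_tail_and_le_length.mpr ⟨?_, ?_⟩, ?_⟩⟩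
  · simpa using hqham.isPath
  · simp [hqham.length_eq]; omega
  · exact fun v => by simpa using hqham v

lemma Walk.IsPath.mem_support_of_adj_of_ncard_neighborSet_le_two [Finite V] {u v y z : V}
    {p : G.Walk u v} (hp : p.IsPath) (hz : z ∈ p.support) (hzu : z ≠ u) (hzv : z ≠ v)
    (hdeg : (G.neighborSet z).ncard ≤ 2) (hzy : G.Adj z y) : y ∈ p.support := by
  obtain ⟨i, rfl, hi⟩ := Walk.mem_support_iff_exists_getVert.mp hz
  have hinternal := hp.ncard_neighborSet_toSubgraph_internal_eq_two
    (fun h => hzu (by simp [h])) (lt_of_le_of_ne hi fun h => hzv (by simp [h]))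
  by_contra hy
  have hy' : y ∉ p.toSubgraph.neighborSet (p.getVert i) := fun h =>
    hy ((p.mem_verts_toSubgraph).mp (p.toSubgraph.edge_vert h.symm))
  have hsub : insert y (p.toSubgraph.neighborSet (p.getVert i)) ⊆ G.neighborSet (p.getVert i) :=
    Set.insert_subset hzy (p.toSubgraph.neighborSet_subset _)
  have := Set.ncard_le_ncard hsub (Set.toFinite _)
  rw [Set.ncard_insert_of_notMem hy' (Set.toFinite _), hinternal] at this
  omega

theorem Connected.exists_isHamiltonian_of_ncard_neighborSet_le_two [Finite V] [DecidableEq V]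
    (hG : G.Connected) (hdeg : ∀ x, (G.neighborSet x).ncard ≤ 2) :
    ∃ u v, ∃ p : G.Walk u v, p.IsHamiltonian := by
  have := Fintype.ofFinite V
  let lengths : Set ℕ := {k | ∃ u v, ∃ p : G.Walk u v, p.IsPath ∧ p.length = k}
  have hbdd : BddAbove lengths := ⟨Fintype.card V, by
    rintro _ ⟨u, v, p, hp, rfl⟩; exact hp.length_lt.le⟩
  have hne : lengths.Nonempty := ⟨0, hG.nonempty.some, _, Walk.nil, Walk.IsPath.nil, rfl⟩
  obtain ⟨u, v, p, hp, hlen⟩ := Nat.sSup_mem hne hbdd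
  have hlongest : ∀ {y u' v'} (q : G.Walk u' v'), q.IsPath → q.length = p.length →
      G.Adj y u' → y ∈ q.support := fun q hq hql hyu => by
    by_contra hy
    have := le_csSup hbdd ⟨_, _, .cons hyu q, hq.cons hy, rfl⟩
    simp only [Walk.length_cons] at this
    omega
  refine ⟨u, v, p, hp.isHamiltonian_of_mem fun w => ?_⟩
  by_contra hw
  obtain ⟨d, -, hd, hd'⟩ :=
    (hG.preconnected w u).some.exists_boundary_dart {x | x ∉ p.support} hw (by simp)
  simp only [Set.mem_ofPred_eq, not_not] at hd hd'
  by_cases hu : d.snd = u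
  · exact hd (hlongest p hp rfl (hu ▸ d.adj))
  by_cases hv : d.snd = v
  · exact hd (by simpa using hlongest p.reverse hp.reverse (by simp) (hv ▸ d.adj))
  exact hd (hp.mem_support_of_adj_of_ncard_neighborSet_le_two hd' hu hv (hdeg _) d.adj.symm)

lemma Connected.ncard_neighborSet_ne_one_of_neighborSet_eq_singleton [Fintype V]
    (hG : G.Connected) (h3 : 3 ≤ Fintype.card V) {u v : V}
    (hv : G.neighborSet v = {u}) : (G.neighborSet u).ncard ≠ 1 := by
  classical
  intro hu
  obtain ⟨v', hv'⟩ := Set.ncard_eq_one.mp hu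
  have hvu : G.Adj v u := show u ∈ G.neighborSet v by simp [hv]
  obtain rfl : v = v' := by simpa [hv'] using show v ∈ G.neighborSet u from hvu.symm
  obtain ⟨w, -, hw⟩ := Finset.exists_mem_notMem_of_card_lt_card (s := {u, v})
    (t := Finset.univ) (Finset.card_le_two.trans_lt (by rw [Finset.card_univ]; omega))
  obtain ⟨d, -, hd, hd'⟩ :=
    (hG.preconnected v w).some.exists_boundary_dart {u, v} (by simp) (by simpa using hw)
  have hadj : d.snd ∈ G.neighborSet d.fst := d.adj
  rcases hd with hd | hd <;> rw [hd] at hadj <;> simp_all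

theorem Connected.exists_leaf_lists [Fintype V] (hG : G.Connected) (h3 : 3 ≤ Fintype.card V)
    {σ : List V} (hσnd : σ.Nodup) (hσ : ∀ x, x ∈ σ ↔ (G.neighborSet x).ncard ≠ 1) :
    ∃ L : V → List V, (∀ x, ∀ y ∈ L x, G.Adj x y) ∧ (σ ++ σ.flatMap L).Nodup ∧
      ∀ v, v ∈ σ ++ σ.flatMap L := by
  classical
  let L x := (Finset.univ.filter fun y => G.Adj x y ∧ (G.neighborSet y).ncard = 1).toList
  have hL : ∀ x y, y ∈ L x ↔ G.Adj x y ∧ (G.neighborSet y).ncard = 1 := by simp [L]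
  have hleaf_unique : ∀ x x' y, y ∈ L x → y ∈ L x' → x = x' := by
    intro x x' y hx hx'
    obtain ⟨hxy, hy⟩ := (hL x y).mp hx
    obtain ⟨u, hu⟩ := Set.ncard_eq_one.mp hy
    have hx : x ∈ G.neighborSet y := hxy.symm
    have hx' : x' ∈ G.neighborSet y := ((hL x' y).mp hx').1.symm
    rw [hu] at hx hx'
    exact hx.trans hx'.symm
  refine ⟨L, fun x y hy => ((hL x y).mp hy).1, ?_, fun v => ?_⟩
  · have hdisj : σ.Pairwise fun x y => (L x).Disjoint (L y) :=
      hσnd.imp fun hne y hy hy' => hne (hleaf_unique _ _ y hy hy')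
    refine List.nodup_append.mpr
      ⟨hσnd, List.nodup_flatMap.mpr ⟨fun x _ => Finset.nodup_toList _, hdisj⟩, ?_⟩
    rintro x hx _ hy rfl
    obtain ⟨u, -, hxu⟩ := List.mem_flatMap.mp hy
    exact (hσ x).mp hx ((hL u x).mp hxu).2
  by_cases hv : (G.neighborSet v).ncard = 1
  · obtain ⟨u, hu⟩ := Set.ncard_eq_one.mp hv
    have hvu : G.Adj v u := show u ∈ G.neighborSet v by simp [hu]
    have hu_spine : u ∈ σ :=
      (hσ u).mpr (hG.ncard_neighborSet_ne_one_of_neighborSet_eq_singleton h3 hu)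
    exact List.mem_append_right _
      (List.mem_flatMap.mpr ⟨u, hu_spine, (hL u v).mpr ⟨hvu.symm, hv⟩⟩)
  · exact List.mem_append_left _ ((hσ v).mpr hv)

end SimpleGraph

section Caterpillar

open Relation

variable {V : Type u}

theorem IsCaterpillar.exists_spine [Fintype V] {T : SimpleGraph V}
    (hT : IsCaterpillar T) (h3 : 3 ≤ Fintype.card V) :
    ∃ σ : List V, σ.Nodup ∧ σ.IsChain T.Adj ∧ ∀ x, x ∈ σ ↔ (T.neighborSet x).ncard ≠ 1 := by
  classical
  obtain ⟨htree, hpre, -, hdeg⟩ := hT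
  have hW : {x | (T.neighborSet x).ncard ≠ 1}.Nonempty := by
    obtain ⟨v⟩ : Nonempty V := Fintype.card_pos_iff.mp (by omega)
    by_cases hv : (T.neighborSet v).ncard = 1
    · obtain ⟨u, hu⟩ := Set.ncard_eq_one.mp hv
      exact ⟨u, htree.connected.ncard_neighborSet_ne_one_of_neighborSet_eq_singleton h3 hu⟩
    · exact ⟨v, hv⟩
  have hconn : (T.induce {x | (T.neighborSet x).ncard ≠ 1}).Connected :=
    { preconnected := hpre, nonempty := hW.to_subtype }
  obtain ⟨u, v, p, hp⟩ := hconn.exists_isHamiltonian_of_ncard_neighborSet_le_two hdeg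
  refine ⟨p.support.map Subtype.val, hp.isPath.support_nodup.map Subtype.val_injective,
    (List.isChain_map _).mpr p.isChain_adj_support, fun x => ⟨?_, fun hx => ?_⟩⟩
  · rintro hx
    obtain ⟨y, -, rfl⟩ := List.mem_map.mp hx
    exact y.2
  · exact List.mem_map.mpr ⟨⟨x, hx⟩, hp.mem_support _, rfl⟩

lemma reflGen_square_adj {T : SimpleGraph V} {w x y : V} (hx : ReflGen T.Adj w x)
    (hy : ReflGen T.Adj w y) : ReflGen (square T).Adj x y := by
  by_cases hxy : x = y
  · exact hxy ▸ .refl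
  refine .single ⟨hxy, ?_⟩
  cases hx with
  | refl => cases hy with
    | refl => exact absurd rfl hxy
    | single h => exact .inl h
  | single hwx => cases hy with
    | refl => exact .inl hwx.symm
    | single hwy => exact .inr ⟨w, hwx.symm, hwy⟩

lemma isChain_reflGen_square {T : SimpleGraph V} {w : V} {l : List V}
    (h : ∀ x ∈ l, ReflGen T.Adj w x) : l.IsChain (ReflGen (square T).Adj) :=
  (List.pairwise_of_forall_mem_list fun x hx y hy => reflGen_square_adj (h x hx) (h y hy)).isChain

def caterpillarTour (L : V → List V) : List V → List V
  | [] => []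
  | [a] => a :: L a
  | a :: b :: s => a :: L b ++ caterpillarTour L s ++ b :: L a

variable (L : V → List V)

lemma caterpillarTour_cons (a : V) (s : List V) : ∃ m, caterpillarTour L (a :: s) = a :: m := by
  cases s <;> exact ⟨_, rfl⟩

lemma caterpillarTour_head? (s : List V) : (caterpillarTour L s).head? = s.head? := by
  rcases s with _ | ⟨a, _ | ⟨b, s⟩⟩ <;> rfl

lemma caterpillarTour_perm : ∀ s : List V, (caterpillarTour L s).Perm (s ++ s.flatMap L)
  | [] => .refl _
  | [a] => by simp [caterpillarTour]
  | a :: b :: s => by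
    classical
    have ih := caterpillarTour_perm s
    rw [List.perm_iff_count] at ih ⊢
    intro x
    simp only [caterpillarTour, List.flatMap_cons, List.cons_append, List.count_cons,
      List.count_append] at ih ⊢
    have := ih x
    omega

variable {L} {T : SimpleGraph V}

theorem isChain_caterpillarTour (hL : ∀ x, ∀ y ∈ L x, T.Adj x y) :
    ∀ {s : List V}, s.IsChain T.Adj →
      (caterpillarTour L s).IsChain (ReflGen (square T).Adj) ∧
        ∀ z ∈ (caterpillarTour L s).getLast?, ∃ a ∈ s.head?, ReflGen T.Adj a z
  | [], _ => ⟨.nil, by simp [caterpillarTour]⟩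
  | [a], _ => by
    have h : ∀ x ∈ a :: L a, ReflGen T.Adj a x := by
      simpa using ⟨.refl, fun y hy => .single (hL a y hy)⟩
    exact ⟨isChain_reflGen_square h, fun z hz => ⟨a, rfl, h z (List.mem_of_getLast? hz)⟩⟩
  | a :: b :: s, hs => by
    obtain ⟨hC, hlast⟩ := isChain_caterpillarTour hL hs.of_cons.of_cons
    have hbs : ∀ c ∈ s.head?, T.Adj b c := hs.of_cons.rel_head?
    have h1 : ∀ x ∈ a :: L b, ReflGen T.Adj b x := by
      simpa using ⟨.single hs.rel.symm, fun y hy => .single (hL b y hy)⟩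
    have h3 : ∀ x ∈ b :: L a, ReflGen T.Adj a x := by
      simpa using ⟨.single hs.rel, fun y hy => .single (hL a y hy)⟩
    refine ⟨((isChain_reflGen_square h1).append hC ?_).append (isChain_reflGen_square h3) ?_, ?_⟩
    · intro x hx y hy
      rw [caterpillarTour_head?] at hy
      exact reflGen_square_adj (h1 x (List.mem_of_getLast? hx)) (.single (hbs y hy))
    · intro x hx y hy
      obtain rfl : y = b := by simpa using hy.symm
      rw [List.getLast?_append] at hx
      cases h : (caterpillarTour L s).getLast? with
      | none =>
        simp only [h, Option.none_or] at hx
        exact reflGen_square_adj (h1 x (List.mem_of_getLast? hx)) .refl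
      | some z =>
        obtain rfl : z = x := by simpa [h] using hx
        obtain ⟨c, hc, hcx⟩ := hlast _ h
        exact reflGen_square_adj hcx (.single (hbs c hc).symm)
    · intro z hz
      rw [caterpillarTour, List.getLast?_append_of_ne_nil _ (List.cons_ne_nil _ _)] at hz
      exact ⟨a, rfl, h3 z (List.mem_of_getLast? hz)⟩

theorem isChain_caterpillarTour_append (hL : ∀ x, ∀ y ∈ L x, T.Adj x y) {a : V} {s : List V}
    (hs : (a :: s).IsChain T.Adj) :
    (caterpillarTour L (a :: s) ++ [a]).IsChain (ReflGen (square T).Adj) := by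
  obtain ⟨hC, hlast⟩ := isChain_caterpillarTour hL hs
  refine hC.append (List.isChain_singleton a) fun z hz y hy => ?_
  obtain ⟨_, ⟨⟩, haz⟩ := hlast z hz
  obtain rfl : y = a := by simpa using hy.symm
  exact reflGen_square_adj haz .refl

end Caterpillar

/-- The square of a finite caterpillar on at least three vertices has a
Hamilton cycle. -/
theorem stmt_2 {V : Type u} [Fintype V] [DecidableEq V] (T : SimpleGraph V) (h3 : 3 ≤ Fintype.card V)
    (hcat : IsCaterpillar T) : (square T).IsHamiltonian := by
  obtain ⟨σ, hσnd, hσchain, hσ⟩ := hcat.exists_spine h3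
  obtain ⟨L, hL, hnd, hcover⟩ := hcat.1.connected.exists_leaf_lists h3 hσnd hσ
  obtain ⟨a, σ, rfl⟩ : ∃ a σ', σ = a :: σ' := by
    obtain ⟨v⟩ : Nonempty V := Fintype.card_pos_iff.mp (by omega)
    exact List.exists_cons_of_ne_nil fun h => by simpa [h] using hcover v
  obtain ⟨m, hm⟩ := caterpillarTour_cons L a σ
  have hperm : (a :: m).Perm (a :: σ ++ (a :: σ).flatMap L) := hm ▸ caterpillarTour_perm L _
  exact isHamiltonian_of_isChain_reflGen h3 (hperm.nodup_iff.mpr hnd)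
    (fun v => hperm.mem_iff.mpr (hcover v)) (hm ▸ isChain_caterpillarTour_append hL hσchain)
end

section
/- Every finite 2-connected outerplanar graph has a Hamilton cycle. Conversely, every finite outerplanar graph with a Hamilton cycle is 2-connected. -/
/-!
Place the vertices on a line in the order of a non-crossing layout. If two consecutive vertices
`u ⋖ w` were not adjacent, take the innermost edge `ab` spanning the gap (`a ≤ u`, `w ≤ b`);
say `a < u`, the case `w < b` being symmetric. An edge leaving `(a, u]` can neither cross `ab`
nor span the gap more tightly than `ab`, so it ends at `a`, and `a` is a cut vertex. In the same
way, if the first vertex `m` is not adjacent to the last one, its largest neighbour `b`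
separates everything beyond `b` from `m`. So consecutive vertices form a Hamiltonian path, which
the edge from the last vertex back to the first closes into a Hamiltonian cycle. Conversely,
deleting a vertex from a Hamiltonian cycle leaves a Hamiltonian path, so the rest stays
connected.
-/

open SimpleGraph

universe u w

/-- Outerplanar: the vertices can be placed (injectively) on a line — equivalently on
a circle, with all vertices on the outer face boundary — so that no two edges cross. -/
def IsOuterplanar {V : Type u} (G : SimpleGraph V) : Prop :=
  ∃ f : V → ℕ, Function.Injective f ∧
    ∀ a b c d : V, G.Adj a b → G.Adj c d →
      ¬(f a < f c ∧ f c < f b ∧ f b < f d)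

/-- 2-connected: at least three vertices, and deleting any single vertex leaves a
connected graph. -/
def TwoConnected {V : Type u} (G : SimpleGraph V) : Prop :=
  3 ≤ Nat.card V ∧ ∀ v : V, (G.induce {u | u ≠ v}).Connected

section

variable {V : Type*} {G : SimpleGraph V}

theorem TwoConnected.exists_ne_ne (hG : TwoConnected G) (u w : V) : ∃ z, z ≠ u ∧ z ≠ w := by
  have : Finite V := Nat.finite_of_card_ne_zero (by have := hG.1; omega)
  exact Cardinal.exists_ne_ne_of_three_le (by rw [← Nat.cast_card]; exact_mod_cast hG.1) u w

theorem TwoConnected.three_le_card [Fintype V] (hG : TwoConnected G) : 3 ≤ Fintype.card V :=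
  Nat.card_eq_fintype_card (α := V) ▸ hG.1

theorem TwoConnected.exists_adj_of_mem_of_notMem (hG : TwoConnected G) {z u b : V} {s : Set V}
    (hu : u ∈ s) (hb : b ∉ s) (huz : u ≠ z) (hbz : b ≠ z) :
    ∃ x ∈ s, ∃ y ∉ s, y ≠ z ∧ G.Adj x y := by
  obtain ⟨p⟩ := (hG.2 z).preconnected ⟨u, huz⟩ ⟨b, hbz⟩
  obtain ⟨d, -, hd₁, hd₂⟩ := p.exists_boundary_dart (Subtype.val ⁻¹' s) hu hb
  exact ⟨d.fst, hd₁, d.snd, hd₂, d.snd.2, d.adj⟩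

theorem TwoConnected.exists_adj (hG : TwoConnected G) (u : V) : ∃ v, G.Adj u v := by
  obtain ⟨z, hzu, -⟩ := hG.exists_ne_ne u u
  obtain ⟨b, hbu, hbz⟩ := hG.exists_ne_ne u z
  obtain ⟨x, rfl, y, -, -, hxy⟩ :=
    hG.exists_adj_of_mem_of_notMem (s := {u}) rfl hbu hzu.symm hbz
  exact ⟨y, hxy⟩

namespace SimpleGraph

def IsNoncrossing [LinearOrder V] (G : SimpleGraph V) : Prop :=
  ∀ ⦃a b c d : V⦄, G.Adj a b → G.Adj c d → ¬(a < c ∧ c < b ∧ b < d)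

namespace IsNoncrossing

variable [LinearOrder V]

theorem exists_innermost_adj [Finite V] (hnc : G.IsNoncrossing) {u w a b : V} (huw : u < w)
    (hab : G.Adj a b) (hau : a ≤ u) (hwb : w ≤ b) :
    ∃ a b, G.Adj a b ∧ a ≤ u ∧ w ≤ b ∧
      ∀ c d, G.Adj c d → c ≤ u → w ≤ d → c ≤ a ∧ b ≤ d := by
  obtain ⟨a₀, ⟨b', hab', ha₀u, hwb'⟩, ha₀max⟩ := Set.exists_max_image
    {a | ∃ b, G.Adj a b ∧ a ≤ u ∧ w ≤ b} id (Set.toFinite _) ⟨a, b, hab, hau, hwb⟩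
  obtain ⟨b₀, ⟨hab₀, hwb₀⟩, hb₀min⟩ := Set.exists_min_image
    {b | G.Adj a₀ b ∧ w ≤ b} id (Set.toFinite _) ⟨b', hab', hwb'⟩
  refine ⟨a₀, b₀, hab₀, ha₀u, hwb₀, fun c d hcd hcu hwd => ?_⟩
  have hca : c ≤ a₀ := ha₀max c ⟨d, hcd, hcu, hwd⟩
  refine ⟨hca, ?_⟩
  rcases hca.eq_or_lt with rfl | hca
  · exact hb₀min d ⟨hcd, hwd⟩
  · exact not_lt.1 fun hdb => hnc hcd hab₀ ⟨hca, ha₀u.trans_lt (huw.trans_le hwd), hdb⟩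

theorem adj_of_covBy [Finite V] (hnc : G.IsNoncrossing) (hG : TwoConnected G) {u w : V}
    (huw : u ⋖ w) : G.Adj u w := by
  obtain ⟨z, hzu, hzw⟩ := hG.exists_ne_ne u w
  obtain ⟨x, hxu, y, hyu, -, hxy⟩ := hG.exists_adj_of_mem_of_notMem (s := Set.Iic u)
    le_rfl (not_le.2 huw.lt) hzu.symm hzw.symm
  obtain ⟨a, b, hab, hau, hwb, hinner⟩ :=
    hnc.exists_innermost_adj huw.lt hxy hxu (not_lt.1 (huw.2 (not_le.1 hyu)))
  rcases hau.lt_or_eq with hau | rfl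
  · obtain ⟨x, ⟨hax, hxu⟩, y, hy, hya, hxy⟩ := hG.exists_adj_of_mem_of_notMem
      (s := Set.Ioc a u) ⟨hau, le_rfl⟩ (fun h => (huw.lt.trans_le hwb).not_ge h.2) hau.ne'
      (hau.trans (huw.lt.trans_le hwb)).ne'
    rcases lt_or_gt_of_ne hya with hya | hay
    · exact (hnc hxy.symm hab ⟨hya, hax, hxu.trans_lt (huw.lt.trans_le hwb)⟩).elim
    · have hwy : w ≤ y := not_lt.1 (huw.2 (not_le.1 fun hyu => hy ⟨hay, hyu⟩))
      exact ((hinner x y hxy hxu hwy).1.not_gt hax).elim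
  rcases hwb.eq_or_lt with rfl | hwb
  · exact hab
  obtain ⟨x, ⟨hwx, hxb⟩, y, hy, hyb, hxy⟩ := hG.exists_adj_of_mem_of_notMem
    (s := Set.Ico w b) ⟨le_rfl, hwb⟩ (fun h => huw.lt.not_ge h.1) hwb.ne (huw.lt.trans hwb).ne
  rcases lt_or_gt_of_ne hyb with hyb | hby
  · have hya : y ≤ a := le_of_not_gt fun hay => hy ⟨not_lt.1 (huw.2 hay), hyb⟩
    exact ((hinner y x hxy.symm hya hwx).2.not_gt hxb).elim
  · exact (hnc hab hxy ⟨huw.lt.trans_le hwx, hxb, hby⟩).elim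

theorem adj_of_isBot_of_isTop [Finite V] (hnc : G.IsNoncrossing) (hG : TwoConnected G)
    {m M : V} (hm : IsBot m) (hM : IsTop M) : G.Adj M m := by
  obtain ⟨b, hb, hbmax⟩ :=
    Set.exists_max_image {b | G.Adj m b} id (Set.toFinite _) (hG.exists_adj m)
  rcases (hM b).eq_or_lt with rfl | hbM
  · exact hb.symm
  have hmb : m < b := (hm b).lt_of_ne hb.ne
  obtain ⟨x, hbx, y, hyb, hy, hxy⟩ := hG.exists_adj_of_mem_of_notMem
    (s := Set.Ioi b) hbM hmb.not_gt hbM.ne' hmb.ne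
  rcases (hm y).eq_or_lt with rfl | hmy
  · exact ((hbmax x hxy.symm).not_gt hbx).elim
  · exact (hnc hb hxy.symm ⟨hmy, (not_lt.1 hyb).lt_of_ne hy, hbx⟩).elim

end IsNoncrossing

theorem exists_isHamiltonian_of_forall_covBy_adj [Finite V] [LinearOrder V] [DecidableEq V]
    (hadj : ∀ u w : V, u ⋖ w → G.Adj u w) {m M : V} (hm : IsBot m) (hM : IsTop M) :
    ∃ p : G.Walk m M, p.IsHamiltonian := by
  suffices h : ∀ x, ∃ p : G.Walk x M, p.IsPath ∧ {y | y ∈ p.support} = Set.Ici x by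
    obtain ⟨p, hp, hsupp⟩ := h m
    exact ⟨p, hp.isHamiltonian_of_mem fun y => hsupp.ge (hm y)⟩
  intro x
  induction x using WellFoundedGT.induction with
  | _ x ih =>
    by_cases hx : IsMax x
    · obtain rfl := (hx (hM x)).antisymm (hM x)
      exact ⟨.nil, .nil, Set.ext fun y => by simpa [eq_comm] using (hM y).ge_iff_eq.symm⟩
    obtain ⟨y, hxy⟩ := exists_covBy_of_wellFoundedLT hx
    obtain ⟨p, hp, hsupp⟩ := ih y hxy.lt
    refine ⟨.cons (hadj x y hxy) p, ?_, ?_⟩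
    · exact hp.cons fun hx => (hsupp.le hx : y ≤ x).not_gt hxy.lt
    · rw [← Set.Ioi_insert, hxy.Ioi_eq, ← hsupp]
      ext; simp

namespace Walk

variable [DecidableEq V]

theorem IsHamiltonian.connected_induce_ne_end {u v : V} {p : G.Walk u v} (hp : p.IsHamiltonian)
    (hnil : ¬p.Nil) : (G.induce {x | x ≠ v}).Connected := by
  have hsupp : {x | x ∈ p.dropLast.support} = {x | x ≠ v} := by
    have hnd := hp.isPath.support_nodup
    have hx := hp.mem_support
    rw [← p.dropLast_support_concat] at hnd hx
    ext x
    rw [Set.mem_ofPred_eq, Set.mem_ofPred_eq, support_dropLast hnil]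
    simp only [List.nodup_append, List.mem_append, List.mem_singleton] at hnd hx
    exact ⟨fun h hxv => hnd.2.2 x h v rfl hxv, (hx x).resolve_right⟩
  exact hsupp ▸ p.dropLast.connected_induce_support

variable [Fintype V]

theorem IsHamiltonian.isHamiltonianCycle_cons {u v : V} {p : G.Walk u v} (hp : p.IsHamiltonian)
    (h : G.Adj v u) (hV : 3 ≤ Fintype.card V) : (cons h p).IsHamiltonianCycle := by
  have hlen := hp.length_eq
  refine isHamiltonianCycle_iff_isCycle_and_length_eq.2 ⟨?_, by rw [length_cons]; omega⟩
  refine (cons_isCycle_iff p h).2 ⟨hp.isPath, fun he => ?_⟩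
  have := hp.isPath.length_eq_one_of_mem_edges (Sym2.eq_swap ▸ he)
  omega

theorem IsHamiltonianCycle.twoConnected {u : V} {p : G.Walk u u} (hp : p.IsHamiltonianCycle) :
    TwoConnected G := by
  have hlen : 3 ≤ Fintype.card V := hp.length_eq ▸ hp.isCycle.three_le_length
  refine ⟨Nat.card_eq_fintype_card (α := V) ▸ hlen, fun v => ?_⟩
  have hq := hp.rotate (hp.mem_support v)
  refine hq.isHamiltonian_tail.connected_induce_ne_end fun hnil => ?_
  have := hq.isHamiltonian_tail.length_eq
  have := hnil.length_eq_zero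
  omega

end Walk

end SimpleGraph

end

/-- Every finite 2-connected outerplanar graph has a Hamilton cycle,
and every finite outerplanar graph with a Hamilton cycle is 2-connected. -/
theorem stmt_6 {V : Type u} [Fintype V] [DecidableEq V] (G : SimpleGraph V) (ho : IsOuterplanar G) :
    (TwoConnected G → ∃ (a : V) (p : G.Walk a a), p.IsHamiltonianCycle) ∧
      ((∃ (a : V) (p : G.Walk a a), p.IsHamiltonianCycle) → TwoConnected G) := by
  refine ⟨fun hG => ?_, fun ⟨_, _, hp⟩ => hp.twoConnected⟩
  obtain ⟨f, hf, hnc⟩ := ho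
  let : LinearOrder V := LinearOrder.lift' f hf
  have : Nonempty V := Fintype.card_pos_iff.1 (by have := hG.three_le_card; omega)
  have hnc : G.IsNoncrossing := fun a b c d => hnc a b c d
  obtain ⟨m, hm⟩ := Finite.exists_min (id : V → V)
  obtain ⟨M, hM⟩ := Finite.exists_max (id : V → V)
  obtain ⟨p, hp⟩ :=
    exists_isHamiltonian_of_forall_covBy_adj (fun _ _ => hnc.adj_of_covBy hG) hm hM
  exact ⟨M, _, hp.isHamiltonianCycle_cons (hnc.adj_of_isBot_of_isTop hG hm hM)
    hG.three_le_card⟩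
end

section
/- Let G be a finite 2-connected outerplanar graph not isomorphic to K^3. Then an edge e of G lies on the (unique) Hamilton cycle of G if and only if e is 2-contractible, i.e., the graph G/e obtained by contracting e is 2-connected. -/
open SimpleGraph

universe u w

/-- The contraction `G/uv`: contract the edge `uv` onto the vertex `u`, suppressing
parallel edges. -/
def contractEdge {V : Type u} (G : SimpleGraph V) (u v : V) :
    SimpleGraph {w : V // w ≠ v} where
  Adj a b := (a : V) ≠ (b : V) ∧
    (G.Adj a b ∨ ((a : V) = u ∧ G.Adj v b) ∨ ((b : V) = u ∧ G.Adj a v))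
  symm := by
    constructor
    rintro a b ⟨hne, h | ⟨ha, hb⟩ | ⟨hb, ha⟩⟩
    · exact ⟨hne.symm, Or.inl h.symm⟩
    · exact ⟨hne.symm, Or.inr (Or.inr ⟨ha, hb.symm⟩)⟩
    · exact ⟨hne.symm, Or.inr (Or.inl ⟨hb, ha.symm⟩)⟩
  loopless := by
    constructor
    rintro a ⟨h, -⟩
    exact h rfl

/-!
Put the vertices on a circle so that no two edges cross; then no edge of `G - x - y` crosses the
chord `xy`, so if `xy` separates two vertices on the circle, `G - x - y` is disconnected.
Contracting `uv` and deleting the new vertex leaves `G - u - v`, and deleting any other vertex `w`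
leaves a quotient of the connected graph `G - w`; so once `|V| ≥ 4` (which is where `K³` is
excluded), `uv` is 2-contractible iff `G - u - v` is connected. For an edge of the Hamilton cycle
the rest of the cycle is a Hamilton path of `G - u - v`; in particular cycle edges separate
nothing. A vertex is joined by a non-separating chord to at most two vertices (its neighbours on
the circle), and its two cycle neighbours are among them; so every other edge `uv` separates, and
`G - u - v` is disconnected.
-/

namespace SimpleGraph

variable {V W : Type*} {G : SimpleGraph V}

theorem Reachable.mem_of_forall_adj_mem {s : Set V} (hs : ∀ a b, G.Adj a b → a ∈ s → b ∈ s)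
    {a b : V} (h : G.Reachable a b) (ha : a ∈ s) : b ∈ s := by
  obtain ⟨w⟩ := h
  induction w with
  | nil => exact ha
  | cons hadj _ ih => exact ih (hs _ _ hadj ha)

theorem Connected.of_surjective_of_eq_or_adj {H : SimpleGraph W} (m : V → W)
    (hm : Function.Surjective m) (hadj : ∀ a b, G.Adj a b → m a = m b ∨ H.Adj (m a) (m b))
    (hG : G.Connected) : H.Connected := by
  have : Nonempty W := hG.nonempty.map m
  refine Connected.mk fun x y => ?_
  obtain ⟨a, rfl⟩ := hm x
  obtain ⟨b, rfl⟩ := hm y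
  rw [reachable_iff_reflTransGen]
  refine ((reachable_iff_reflTransGen a b).mp (hG.preconnected a b)).lift' m fun a b h => ?_
  rcases hadj a b h with heq | hH
  · rw [Function.onFun, heq]
  · exact .single hH

namespace Walk

theorem IsPath.mem_support_tail_iff {u v w : V} {p : G.Walk u v} (hp : p.IsPath)
    (hnil : ¬p.Nil) : w ∈ p.tail.support ↔ w ∈ p.support ∧ w ≠ u := by
  have hnd := hp.support_nodup
  rw [← cons_support_tail hnil] at hnd ⊢
  rw [List.nodup_cons] at hnd
  constructor
  · exact fun h => ⟨List.mem_cons_of_mem _ h, fun hwu => hnd.1 (hwu ▸ h)⟩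
  · rintro ⟨h, hwu⟩
    exact (List.mem_cons.mp h).resolve_left hwu

theorem IsCycle.connected_induce_ne_start_snd {x : V} {q : G.Walk x x} (hq : q.IsCycle)
    (hspan : ∀ w, w ∈ q.support) : (G.induce {w | w ≠ x ∧ w ≠ q.snd}).Connected := by
  have hlen := hq.three_le_length
  have hnil₁ : ¬q.tail.Nil := by
    rw [← length_eq_zero_iff]
    have := length_tail_add_one hq.not_nil
    omega
  have hnil₂ : ¬q.tail.tail.reverse.Nil := by
    rw [← length_eq_zero_iff, length_reverse]
    have := length_tail_add_one hq.not_nil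
    have := length_tail_add_one hnil₁
    omega
  have hpath₁ : q.tail.IsPath := hq.isPath_tail
  have hpath₂ : q.tail.tail.reverse.IsPath := hpath₁.tail.reverse
  have hspan₁ : ∀ w, w ∈ q.tail.support := fun w => by
    have := hspan w
    rw [← cons_support_tail hq.not_nil, List.mem_cons] at this
    exact this.elim (fun h => h ▸ q.tail.end_mem_support) id
  -- cut `x` and `q.snd` off the front of `q`, then `x` off its end
  have hS : {w | w ≠ x ∧ w ≠ q.snd} = {w | w ∈ q.tail.tail.reverse.tail.support} := by
    ext w
    simp only [hpath₂.mem_support_tail_iff hnil₂, support_reverse, List.mem_reverse,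
      hpath₁.mem_support_tail_iff hnil₁, Set.mem_ofPred_eq, hspan₁]
    tauto
  rw [hS]
  exact connected_induce_support _

theorem IsHamiltonianCycle.connected_induce_of_mem_edges [DecidableEq V] {a x y : V}
    {p : G.Walk a a} (hp : p.IsHamiltonianCycle) (h : s(x, y) ∈ p.edges) :
    (G.induce {w | w ≠ x ∧ w ≠ y}).Connected := by
  have hx := hp.mem_support x
  have hq : (p.rotate x hx).IsCycle := hp.isCycle.rotate hx
  have hspan : ∀ w, w ∈ (p.rotate x hx).support := by simp [hp.mem_support]
  have hy : y ∈ (p.rotate x hx).toSubgraph.neighborSet x := by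
    rw [Subgraph.mem_neighborSet, adj_toSubgraph_iff_mem_edges]
    exact (rotate_edges p x hx).perm.mem_iff.mpr h
  rw [hq.neighborSet_toSubgraph_endpoint] at hy
  rcases hy with rfl | rfl
  · exact hq.connected_induce_ne_start_snd hspan
  · rw [← snd_reverse]
    exact hq.reverse.connected_induce_ne_start_snd (by simpa using hspan)

theorem IsHamiltonianCycle.four_le_card [Fintype V] [DecidableEq V] {a : V} {p : G.Walk a a}
    (hp : p.IsHamiltonianCycle) (hK3 : ¬Nonempty (G ≃g completeGraph (Fin 3))) :
    4 ≤ Nat.card V := by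
  have h3 : 3 ≤ Fintype.card V := hp.length_eq ▸ hp.isCycle.three_le_length
  rw [Nat.card_eq_fintype_card]
  by_contra! hlt
  have hcard : Fintype.card V = 3 := by omega
  have hadj : ∀ x y, x ≠ y → G.Adj x y := by
    intro x y hxy
    have hN : p.toSubgraph.neighborSet x = {x}ᶜ := by
      refine Set.eq_of_subset_of_ncard_le (fun y hy => (Subgraph.Adj.ne hy).symm) ?_
      rw [hp.isCycle.ncard_neighborSet_toSubgraph_eq_two (hp.mem_support x), Set.ncard_compl,
        Set.ncard_singleton, Nat.card_eq_fintype_card, hcard]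
    have hy : y ∈ p.toSubgraph.neighborSet x := hN ▸ hxy.symm
    exact p.toSubgraph.adj_sub hy
  refine hK3 ⟨{ toEquiv := Fintype.equivFinOfCardEq hcard, map_rel_iff' := ?_ }⟩
  intro x y
  simpa using ⟨hadj x y, G.ne_of_adj⟩

end Walk

end SimpleGraph

section Contraction

variable {V : Type*} {G : SimpleGraph V} {u v : V}

def contractEdgeInduceIso (huv : u ≠ v) :
    (contractEdge G u v).induce {x | x ≠ ⟨u, huv⟩} ≃g G.induce {w | w ≠ u ∧ w ≠ v} where
  toFun x := ⟨x.1.1, fun h => x.2 (Subtype.ext h), x.1.2⟩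
  invFun w := ⟨⟨w.1, w.2.2⟩, fun h => w.2.1 (congrArg Subtype.val h)⟩
  map_rel_iff' {a b} := by
    have ha : a.1.1 ≠ u := fun h => a.2 (Subtype.ext h)
    have hb : b.1.1 ≠ u := fun h => b.2 (Subtype.ext h)
    simp only [Equiv.coe_fn_mk, comap_adj, Function.Embedding.coe_subtype, contractEdge, ha, hb,
      false_and, or_false]
    exact ⟨fun h => ⟨h.ne, h⟩, And.right⟩

variable [DecidableEq V]

def contractEdgeMap (huv : u ≠ v) (z : V) : {w // w ≠ v} :=
  if hz : z = v then ⟨u, huv⟩ else ⟨z, hz⟩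

theorem contractEdgeMap_eq_or_adj (huv : u ≠ v) {a b : V} (hab : G.Adj a b) :
    contractEdgeMap huv a = contractEdgeMap huv b ∨
      (contractEdge G u v).Adj (contractEdgeMap huv a) (contractEdgeMap huv b) := by
  unfold contractEdgeMap
  split_ifs with ha hb hb
  · exact absurd (ha.trans hb.symm) hab.ne
  · subst ha
    by_cases hbu : b = u
    · exact .inl (Subtype.ext hbu.symm)
    · exact .inr ⟨Ne.symm hbu, .inr (.inl ⟨rfl, hab⟩)⟩
  · subst hb
    by_cases hau : a = u
    · exact .inl (Subtype.ext hau)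
    · exact .inr ⟨hau, .inr (.inr ⟨rfl, hab⟩)⟩
  · exact .inr ⟨hab.ne, .inl hab⟩

theorem connected_induce_contractEdge_of_ne (huv : u ≠ v) {w : {x // x ≠ v}} (hwu : w.1 ≠ u)
    (hG : (G.induce {x | x ≠ w.1}).Connected) :
    ((contractEdge G u v).induce {x | x ≠ w}).Connected := by
  have hne : ∀ z : V, z ≠ w.1 → contractEdgeMap huv z ≠ w := by
    intro z hz h
    unfold contractEdgeMap at h
    split_ifs at h
    · exact hwu (congrArg Subtype.val h).symm
    · exact hz (congrArg Subtype.val h)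
  refine Connected.of_surjective_of_eq_or_adj
    (fun z : ({x | x ≠ w.1} : Set V) => (⟨contractEdgeMap huv z.1, hne z.1 z.2⟩ : {x | x ≠ w}))
    (fun x => ⟨⟨x.1.1, fun h => x.2 (Subtype.ext h)⟩, ?_⟩) (fun a b hab => ?_) hG
  · simp [contractEdgeMap, x.1.2]
  · simpa [Subtype.ext_iff] using contractEdgeMap_eq_or_adj huv hab

theorem twoConnected_contractEdge_iff (h2 : TwoConnected G) (hcard : 4 ≤ Nat.card V)
    (huv : u ≠ v) :
    TwoConnected (contractEdge G u v) ↔ (G.induce {w | w ≠ u ∧ w ≠ v}).Connected := by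
  have : Finite V := Nat.finite_of_card_ne_zero (by omega)
  refine ⟨fun h => (contractEdgeInduceIso huv).connected_iff.mp (h.2 ⟨u, huv⟩),
    fun h => ⟨?_, fun w => ?_⟩⟩
  · have hcard' : Nat.card {w // w ≠ v} = Nat.card V - 1 := by
      rw [← Set.ncard_singleton v, ← Set.ncard_compl]
      rfl
    omega
  · by_cases hw : w = ⟨u, huv⟩
    · subst hw
      exact (contractEdgeInduceIso huv).connected_iff.mpr h
    · exact connected_induce_contractEdge_of_ne huv (fun h => hw (Subtype.ext h)) (h2.2 w)

end Contraction

section Outerplanar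

variable {V : Type*} {G : SimpleGraph V} {f : V → ℕ}

def IsOuterplanarDrawing (G : SimpleGraph V) (f : V → ℕ) : Prop :=
  Function.Injective f ∧
    ∀ a b c d : V, G.Adj a b → G.Adj c d → ¬(f a < f c ∧ f c < f b ∧ f b < f d)

/-- Reading the positions `f` around a circle, the chord `xy` separates `z` from `t`. -/
def Separates (f : V → ℕ) (x y z t : V) : Prop :=
  min (f x) (f y) < f z ∧ f z < max (f x) (f y) ∧
    (f t < min (f x) (f y) ∨ max (f x) (f y) < f t)

theorem IsOuterplanarDrawing.not_connected_induce_of_separates (hf : IsOuterplanarDrawing G f)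
    {x y z t : V} (hxy : G.Adj x y) (h : Separates f x y z t) :
    ¬(G.induce {w | w ≠ x ∧ w ≠ y}).Connected := by
  intro hconn
  unfold Separates at h
  have hz : z ∈ {w | w ≠ x ∧ w ≠ y} := by
    constructor <;> rintro rfl <;> omega
  have ht : t ∈ {w | w ≠ x ∧ w ≠ y} := by
    constructor <;> rintro rfl <;> omega
  have hinside : ∀ a b : {w | w ≠ x ∧ w ≠ y}, (G.induce {w | w ≠ x ∧ w ≠ y}).Adj a b →
      min (f x) (f y) < f a ∧ f a < max (f x) (f y) →
      min (f x) (f y) < f b ∧ f b < max (f x) (f y) := by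
    intro a b (hab : G.Adj a b) ha
    have hbx : f b ≠ f x := hf.1.ne b.2.1
    have hby : f b ≠ f y := hf.1.ne b.2.2
    have := hf.2 b a x y hab.symm hxy
    have := hf.2 b a y x hab.symm hxy.symm
    have := hf.2 x y a b hxy hab
    have := hf.2 y x a b hxy.symm hab
    omega
  have ht' : min (f x) (f y) < f t ∧ f t < max (f x) (f y) :=
    (hconn.preconnected ⟨z, hz⟩ ⟨t, ht⟩).mem_of_forall_adj_mem hinside ⟨h.1, h.2.1⟩
  omega

theorem SimpleGraph.Walk.IsHamiltonianCycle.not_separates_of_mem_edges [DecidableEq V] {a x y : V}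
    {p : G.Walk a a} (hp : p.IsHamiltonianCycle) (hf : IsOuterplanarDrawing G f)
    (h : s(x, y) ∈ p.edges) (z t : V) : ¬Separates f x y z t := fun hs =>
  hf.not_connected_induce_of_separates (p.adj_of_mem_edges h) hs
    (hp.connected_induce_of_mem_edges h)

/-- If `y` lies between `x` and `y'`, a further vertex `w` is separated from `y` by `xy'`, or from
`y'` by `xy`, or lies between `y` and `y'`, and then `xw` separates `y` from `y'`. -/
theorem false_of_forall_not_separates_of_between {x y y' w : V} (hwx : f w ≠ f x)
    (hwy : f w ≠ f y) (hwy' : f w ≠ f y')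
    (hbetween : f x < f y ∧ f y < f y' ∨ f y' < f y ∧ f y < f x)
    (h : ∀ z t, ¬Separates f x y z t) (h' : ∀ z t, ¬Separates f x y' z t)
    (hw : ∀ z t, ¬Separates f x w z t) : False := by
  have := h w y'
  have := h' y w
  have := hw y y'
  simp only [Separates] at *
  omega

theorem eq_or_eq_of_forall_not_separates (hf : Function.Injective f) {x y₁ y₂ y : V}
    (hy : y₁ ≠ y₂) (hx₁ : x ≠ y₁) (hx₂ : x ≠ y₂) (hx : x ≠ y)
    (h₁ : ∀ z t, ¬Separates f x y₁ z t) (h₂ : ∀ z t, ¬Separates f x y₂ z t)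
    (h : ∀ z t, ¬Separates f x y z t) : y = y₁ ∨ y = y₂ := by
  by_contra! hne
  wlog h12 : f y₁ < f y₂ generalizing y₁ y₂
  · exact this hy.symm hx₂ hx₁ h₂ h₁ hne.symm ((hf.ne hy).symm.lt_of_le (not_lt.mp h12))
  have := hf.ne hx₁
  have := hf.ne hx₂
  have := hf.ne hx
  have := hf.ne hne.1
  have := hf.ne hne.2
  obtain h' | ⟨h1x, hx2⟩ | h' : f x < f y₁ ∨ (f y₁ < f x ∧ f x < f y₂) ∨ f y₂ < f x := by
    omega
  · exact false_of_forall_not_separates_of_between (by omega) (by omega) (by omega)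
      (.inl ⟨h', h12⟩) h₁ h₂ h
  · obtain h' | h' | h' | h' : (f x < f y ∧ f y < f y₂) ∨ f y₂ < f y ∨
        (f y₁ < f y ∧ f y < f x) ∨ f y < f y₁ := by
      omega
    · exact false_of_forall_not_separates_of_between (by omega) (by omega) (by omega)
        (.inl h') h h₂ h₁
    · exact false_of_forall_not_separates_of_between (by omega) (by omega) (by omega)
        (.inl ⟨hx2, h'⟩) h₂ h h₁
    · exact false_of_forall_not_separates_of_between (by omega) (by omega) (by omega)
        (.inr h') h h₁ h₂
    · exact false_of_forall_not_separates_of_between (by omega) (by omega) (by omega)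
        (.inr ⟨h', h1x⟩) h₁ h h₂
  · exact false_of_forall_not_separates_of_between (by omega) (by omega) (by omega)
      (.inr ⟨h12, h'⟩) h₂ h₁ h

theorem SimpleGraph.Walk.IsHamiltonianCycle.exists_separates_of_not_mem_edges [DecidableEq V]
    {a u v : V} {p : G.Walk a a} (hp : p.IsHamiltonianCycle) (hf : IsOuterplanarDrawing G f)
    (huv : G.Adj u v) (h : s(u, v) ∉ p.edges) : ∃ z t, Separates f u v z t := by
  by_contra! hsep
  obtain ⟨y₁, y₂, hy, hN⟩ := Set.ncard_eq_two.mp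
    (hp.isCycle.ncard_neighborSet_toSubgraph_eq_two (hp.mem_support u))
  have hmem : ∀ y, s(u, y) ∈ p.edges ↔ y = y₁ ∨ y = y₂ := fun y => by
    rw [← Walk.adj_toSubgraph_iff_mem_edges, ← Subgraph.mem_neighborSet,
      hN, Set.mem_insert_iff, Set.mem_singleton_iff]
  have hy₁ := (hmem y₁).mpr (.inl rfl)
  have hy₂ := (hmem y₂).mpr (.inr rfl)
  refine h ((hmem v).mpr (eq_or_eq_of_forall_not_separates hf.1 hy ?_ ?_ huv.ne
    (hp.not_separates_of_mem_edges hf hy₁) (hp.not_separates_of_mem_edges hf hy₂) hsep))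
  · exact (p.adj_of_mem_edges hy₁).ne
  · exact (p.adj_of_mem_edges hy₂).ne

end Outerplanar

/-- In a finite 2-connected outerplanar graph other than `K³`, an edge
lies on the (unique) Hamilton cycle iff it is 2-contractible. -/
theorem stmt_8 {V : Type u} [Fintype V] [DecidableEq V] (G : SimpleGraph V) (ho : IsOuterplanar G)
    (h2 : TwoConnected G) (hK3 : ¬ Nonempty (G ≃g completeGraph (Fin 3)))
    (a : V) (p : G.Walk a a) (hp : p.IsHamiltonianCycle) :
    ∀ u v : V, G.Adj u v → (s(u, v) ∈ p.edges ↔ TwoConnected (contractEdge G u v)) := by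
  obtain ⟨f, hf⟩ : ∃ f, IsOuterplanarDrawing G f := ho
  intro u v huv
  rw [twoConnected_contractEdge_iff h2 (hp.four_le_card hK3) huv.ne]
  refine ⟨hp.connected_induce_of_mem_edges, fun hconn => ?_⟩
  by_contra hchord
  obtain ⟨z, t, hsep⟩ := hp.exists_separates_of_not_mem_edges hf huv hchord
  exact hf.not_connected_induce_of_separates huv hsep hconn
end

section
/- Let G be a finite 2-connected graph without K_{2,3} as a minor, and let K_0 be a connected subgraph of G. Then every connected component K_1 of G - (V(K_0) ∪ N(K_0)) satisfies |N(K_1)| = 2, where N denotes the neighborhood in G. -/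
open SimpleGraph

universe u w

/-- The neighbourhood of a set of vertices: all vertices outside the set with a
neighbour inside it. -/
def nbhdSet {V : Type u} (G : SimpleGraph V) (S : Set V) : Set V :=
  {v | v ∉ S ∧ ∃ u ∈ S, G.Adj u v}

-- auxiliary: singleton induce is connected
lemma induce_singleton_connected {V : Type u} (G : SimpleGraph V) (v : V) :
    (G.induce {v}).Connected := by
  constructor
  · intro a b
    have : a = b := Subtype.ext (a.2.trans b.2.symm)
    exact this ▸ Reachable.refl a

-- TwoConnected implies Connected
lemma TwoConnected.connected {V : Type u} [Fintype V] {G : SimpleGraph V}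
    (h : TwoConnected G) : G.Connected := by
  have hcard := h.1
  have hne : Nonempty V := by
    have hpos : 0 < Nat.card V := by omega
    exact (Nat.card_pos_iff.mp hpos).1
  constructor
  · intro a b
    rcases eq_or_ne a b with rfl | hab
    · exact Reachable.refl a
    -- find z ≠ a, b
    have hz : ∃ z : V, z ≠ a ∧ z ≠ b := by
      by_contra hc
      push_neg at hc
      have hsub : (Set.univ : Set V) ⊆ {a, b} := by
        intro z _
        rcases Classical.em (z = a) with rfl | hza
        · exact Set.mem_insert _ _
        · exact Set.mem_insert_of_mem _ (hc z hza)
      have h1 : (Set.univ : Set V).ncard ≤ ({a, b} : Set V).ncard :=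
        Set.ncard_le_ncard hsub (Set.toFinite _)
      have h2 : ({a, b} : Set V).ncard ≤ 2 := by
        refine le_trans (Set.ncard_insert_le _ _) ?_
        simp [Set.ncard_singleton]
      rw [Set.ncard_univ] at h1
      omega
    obtain ⟨z, hza, hzb⟩ := hz
    have hconn := h.2 z
    have := hconn.preconnected ⟨a, hza.symm⟩ ⟨b, hzb.symm⟩
    exact this.map (Embedding.induce {u | u ≠ z}).toHom

/-- In a finite 2-connected graph without a `K_{2,3}` minor, every
component of the graph left after removing a connected subgraph together with its
neighbourhood has a neighbourhood of size exactly 2. -/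
theorem stmt_9 {V : Type u} [Fintype V] (G : SimpleGraph V) (h2 : TwoConnected G)
    (hK23 : ¬ IsMinor G K23) (S₀ : Set V) (hS₀ : (G.induce S₀).Connected)
    (S₁ : Set V) (hsub : S₁ ⊆ (S₀ ∪ nbhdSet G S₀)ᶜ) (hS₁ : (G.induce S₁).Connected)
    (hmax : ∀ x ∈ (S₀ ∪ nbhdSet G S₀)ᶜ, (∃ y ∈ S₁, G.Adj x y) → x ∈ S₁) :
    (nbhdSet G S₁).ncard = 2 := by
  have hGconn := h2.connected
  have hS₀ne : S₀.Nonempty := by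
    obtain ⟨⟨v, hv⟩⟩ := hS₀.nonempty
    exact ⟨v, hv⟩
  have hS₁ne : S₁.Nonempty := by
    obtain ⟨⟨v, hv⟩⟩ := hS₁.nonempty
    exact ⟨v, hv⟩
  obtain ⟨u₁, hu₁⟩ := hS₁ne
  obtain ⟨w₀, hw₀⟩ := hS₀ne
  -- S₁ is disjoint from S₀ and from N(S₀)
  have hd01 : ∀ x ∈ S₁, x ∉ S₀ := fun x hx h0 => (hsub hx) (Or.inl h0)
  have hd0N : ∀ x ∈ S₁, x ∉ nbhdSet G S₀ := fun x hx h0 => (hsub hx) (Or.inr h0)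
  -- neighbourhood of S₁ is contained in neighbourhood of S₀
  have hNsub : nbhdSet G S₁ ⊆ nbhdSet G S₀ := by
    rintro v ⟨hvS₁, u, huS₁, huv⟩
    by_cases hvc : v ∈ (S₀ ∪ nbhdSet G S₀)ᶜ
    · exact absurd (hmax v hvc ⟨u, huS₁, huv.symm⟩) hvS₁
    · rw [Set.mem_compl_iff, not_not] at hvc
      rcases hvc with hv0 | hvN
      · exact absurd ⟨hd01 u huS₁, v, hv0, huv.symm⟩ (hd0N u huS₁)
      · exact hvN
  -- Upper bound: at most 2
  have hub : (nbhdSet G S₁).ncard ≤ 2 := by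
    by_contra hc
    push_neg at hc
    rw [Set.two_lt_ncard (Set.toFinite _)] at hc
    obtain ⟨a, ha, b, hb, c, hc', hab, hac, hbc⟩ := hc
    apply hK23
    refine ⟨Sum.elim ![S₀, S₁] (fun j => {(![a, b, c] : Fin 3 → V) j}), ?_, ?_, ?_, ?_⟩
    · rintro (i | j)
      · fin_cases i
        · simpa using ⟨w₀, hw₀⟩
        · simpa using ⟨u₁, hu₁⟩
      · fin_cases j <;> simp
    · rintro (i | j)
      · fin_cases i
        · simpa using hS₀
        · simpa using hS₁
      · fin_cases j <;> simpa using induce_singleton_connected G _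
    · have haN0 := hNsub ha
      have hbN0 := hNsub hb
      have hcN0 := hNsub hc'
      have hdisj01 : Disjoint S₀ S₁ := by
        rw [Set.disjoint_right]
        exact fun x hx => hd01 x hx
      intro x y hxy
      rcases x with i | j <;> rcases y with i' | j'
      · fin_cases i <;> fin_cases i' <;>
          first
            | exact absurd rfl hxy
            | simpa using hdisj01
            | simpa using hdisj01.symm
      · have h0 : ∀ t ∈ nbhdSet G S₁, Disjoint S₀ {t} := fun t ht =>
          Set.disjoint_singleton_right.mpr (hNsub ht).1
        have h1 : ∀ t ∈ nbhdSet G S₁, Disjoint S₁ {t} := fun t ht =>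
          Set.disjoint_singleton_right.mpr ht.1
        fin_cases i <;> fin_cases j' <;>
          simp only [Sum.elim_inl, Sum.elim_inr, Matrix.cons_val_zero, Matrix.cons_val_one,
            Matrix.head_cons, Matrix.cons_val_two, Matrix.tail_cons] <;>
          first
            | exact h0 _ ha | exact h0 _ hb | exact h0 _ hc'
            | exact h1 _ ha | exact h1 _ hb | exact h1 _ hc'
      · have h0 : ∀ t ∈ nbhdSet G S₁, Disjoint {t} S₀ := fun t ht =>
          (Set.disjoint_singleton_right.mpr (hNsub ht).1).symm
        have h1 : ∀ t ∈ nbhdSet G S₁, Disjoint {t} S₁ := fun t ht =>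
          (Set.disjoint_singleton_right.mpr ht.1).symm
        fin_cases j <;> fin_cases i' <;>
          simp only [Sum.elim_inl, Sum.elim_inr, Matrix.cons_val_zero, Matrix.cons_val_one,
            Matrix.head_cons, Matrix.cons_val_two, Matrix.tail_cons] <;>
          first
            | exact h0 _ ha | exact h0 _ hb | exact h0 _ hc'
            | exact h1 _ ha | exact h1 _ hb | exact h1 _ hc'
      · fin_cases j <;> fin_cases j' <;>
          simp only [Sum.elim_inl, Sum.elim_inr, Matrix.cons_val_zero, Matrix.cons_val_one,
            Matrix.head_cons, Matrix.cons_val_two, Matrix.tail_cons] <;>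
          first
            | exact absurd rfl hxy
            | exact Set.disjoint_singleton.mpr hab
            | exact Set.disjoint_singleton.mpr hac
            | exact Set.disjoint_singleton.mpr hbc
            | exact Set.disjoint_singleton.mpr hab.symm
            | exact Set.disjoint_singleton.mpr hac.symm
            | exact Set.disjoint_singleton.mpr hbc.symm
    · intro x y hxy
      rcases x with i | j <;> rcases y with i' | j'
      · exact absurd hxy (by simp [K23, completeBipartiteGraph])
      · obtain ⟨n0a, pa, hpa, hpaa⟩ := hNsub ha
        obtain ⟨n0b, pb, hpb, hpbb⟩ := hNsub hb
        obtain ⟨n0c, pc, hpc, hpcc⟩ := hNsub hc'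
        obtain ⟨m0a, qa, hqa, hqaa⟩ := ha
        obtain ⟨m0b, qb, hqb, hqbb⟩ := hb
        obtain ⟨m0c, qc, hqc, hqcc⟩ := hc'
        fin_cases i <;> fin_cases j' <;> simp only [Sum.elim_inl, Sum.elim_inr,
          Matrix.cons_val_zero, Matrix.cons_val_one, Matrix.head_cons, Matrix.cons_val_two,
          Matrix.tail_cons, Set.mem_singleton_iff]
        · exact ⟨pa, hpa, a, rfl, hpaa⟩
        · exact ⟨pb, hpb, b, rfl, hpbb⟩
        · exact ⟨pc, hpc, c, rfl, hpcc⟩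
        · exact ⟨qa, hqa, a, rfl, hqaa⟩
        · exact ⟨qb, hqb, b, rfl, hqbb⟩
        · exact ⟨qc, hqc, c, rfl, hqcc⟩
      · obtain ⟨n0a, pa, hpa, hpaa⟩ := hNsub ha
        obtain ⟨n0b, pb, hpb, hpbb⟩ := hNsub hb
        obtain ⟨n0c, pc, hpc, hpcc⟩ := hNsub hc'
        obtain ⟨m0a, qa, hqa, hqaa⟩ := ha
        obtain ⟨m0b, qb, hqb, hqbb⟩ := hb
        obtain ⟨m0c, qc, hqc, hqcc⟩ := hc'
        fin_cases j <;> fin_cases i' <;> simp only [Sum.elim_inl, Sum.elim_inr,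
          Matrix.cons_val_zero, Matrix.cons_val_one, Matrix.head_cons, Matrix.cons_val_two,
          Matrix.tail_cons, Set.mem_singleton_iff]
        · exact ⟨a, rfl, pa, hpa, hpaa.symm⟩
        · exact ⟨a, rfl, qa, hqa, hqaa.symm⟩
        · exact ⟨b, rfl, pb, hpb, hpbb.symm⟩
        · exact ⟨b, rfl, qb, hqb, hqbb.symm⟩
        · exact ⟨c, rfl, pc, hpc, hpcc.symm⟩
        · exact ⟨c, rfl, qc, hqc, hqcc.symm⟩
      · exact absurd hxy (by simp [K23, completeBipartiteGraph])
  -- Lower bound: at least 2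
  have hlb : 2 ≤ (nbhdSet G S₁).ncard := by
    -- first element: boundary of a walk from S₁ to S₀ in G
    have hw₀n : w₀ ∉ S₁ := fun h => hd01 w₀ h hw₀
    obtain ⟨p⟩ := hGconn.preconnected u₁ w₀
    obtain ⟨d, _, hd1, hd2⟩ := p.exists_boundary_dart S₁ hu₁ hw₀n
    have hvN : d.snd ∈ nbhdSet G S₁ := ⟨hd2, d.fst, hd1, d.adj⟩
    set v := d.snd with hv
    -- second element: boundary of a walk from S₁ to S₀ in G - v
    have hvN0 := hNsub hvN
    have hu₁v : u₁ ≠ v := fun h => hvN.1 (h ▸ hu₁)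
    have hw₀v : w₀ ≠ v := fun h => hvN0.1 (h ▸ hw₀)
    obtain ⟨q⟩ := (h2.2 v).preconnected ⟨u₁, hu₁v⟩ ⟨w₀, hw₀v⟩
    obtain ⟨e, _, he1, he2⟩ := q.exists_boundary_dart {x | x.val ∈ S₁}
      (by exact hu₁) (by exact hw₀n)
    have heN : (e.snd : V) ∈ nbhdSet G S₁ := ⟨he2, e.fst, he1, e.adj⟩
    have hene : (e.snd : V) ≠ v := e.snd.2
    rw [show (2 : ℕ) = 1 + 1 by rfl]
    rw [Nat.add_one_le_iff, Set.one_lt_ncard (Set.toFinite _)]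
    exact ⟨v, hvN, e.snd, heN, fun h => hene h.symm⟩
  omega
end

section
/- Let G be a finite Eulerian multigraph and let v be a vertex of degree 4 in G. Then among the three ways to split v into two vertices v_1, v_2 each inheriting two of the four edges at v, at least two of the resulting multigraphs are Eulerian (i.e., connected with all degrees even). -/
open SimpleGraph

universe u w

/-- A multigraph: a type of edges together with a map assigning to each edge its
(unordered) pair of endpoints. -/
structure Multigraph (V : Type u) (E : Type w) where
  ends : E → Sym2 V

namespace Multigraph

variable {V : Type u} {E : Type w}

/-- The underlying simple graph of a multigraph. -/
def toSimple (M : Multigraph V E) : SimpleGraph V where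
  Adj a b := a ≠ b ∧ ∃ e, M.ends e = s(a, b)
  symm := by
    constructor
    rintro a b ⟨h, e, he⟩
    exact ⟨h.symm, e, by rwa [Sym2.eq_swap]⟩
  loopless := ⟨fun a h => h.1 rfl⟩

/-- A multigraph is connected if its underlying simple graph is connected. -/
def Connected (M : Multigraph V E) : Prop := M.toSimple.Connected

/-- The degree of a vertex in a multigraph; loops count twice. -/
def degree [Fintype E] [DecidableEq V] (M : Multigraph V E) (v : V) : ℕ :=
  ∑ e : E, ((if v ∈ M.ends e then 1 else 0) + (if M.ends e = s(v, v) then 1 else 0))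

/-- Eulerian: connected with every vertex of even degree. -/
def Eulerian [Fintype E] [DecidableEq V] (M : Multigraph V E) : Prop :=
  M.Connected ∧ ∀ v : V, Even (M.degree v)

/-- The `v`-split of a multigraph: replace `v` by the two vertices `Sum.inr false` and
`Sum.inr true`; an edge `e` formerly incident with `v` becomes incident with
`Sum.inr (σ e)`. -/
def splitVertex [DecidableEq V] (M : Multigraph V E) (v : V) (σ : E → Bool) :
    Multigraph ({w : V // w ≠ v} ⊕ Bool) E where
  ends e := (M.ends e).map fun w => if h : w = v then Sum.inr (σ e) else Sum.inl ⟨w, h⟩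

end Multigraph

/-!
Let `e₁, a, b, c` be the edges at `v`. Giving each new vertex two of them keeps all degrees even,
so a split is Eulerian iff it is connected, that is (`G` being connected) iff its two new vertices
are joined in it. It suffices that the splits pairing `e₁` with `a` and with `b` are not both
disconnected. If they were, let `K` be the component of `G - v` containing the far end of `e₁`:
the first split keeps the far ends of `b` and `c` out of `K`, the second that of `a`, so `e₁`
would be the only edge leaving `K`. But when all degrees are even, every vertex set is left by an
even number of edges.
-/

lemma Function.Injective.mem_sym2_map_iff {α β : Type*} {f : α → β}
    (hf : Function.Injective f) {a : α} {z : Sym2 α} : f a ∈ z.map f ↔ a ∈ z := by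
  simp [Sym2.mem_map, hf.eq_iff]

lemma Function.Injective.sym2_map_eq_diag_iff {α β : Type*} {f : α → β}
    (hf : Function.Injective f) {a : α} {z : Sym2 α} : z.map f = s(f a, f a) ↔ z = s(a, a) :=
  (Sym2.map.injective hf).eq_iff' rfl

namespace Multigraph

open Finset

variable {V : Type u} {E : Type w}

section Cuts

def Crosses (M : Multigraph V E) (C : Set V) (e : E) : Prop :=
  ∃ a ∈ C, ∃ b ∉ C, M.ends e = s(a, b)

lemma crosses_iff_of_ends_eq (M : Multigraph V E) {C : Set V} {e : E} {a b : V}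
    (h : M.ends e = s(a, b)) : M.Crosses C e ↔ (a ∈ C ∧ b ∉ C ∨ b ∈ C ∧ a ∉ C) := by
  simp only [Crosses, h, Sym2.eq_iff]
  grind

variable [DecidableEq V]

lemma degree_summand_mk (a b w : V) :
    ((if w ∈ s(a, b) then 1 else 0) + (if s(a, b) = s(w, w) then 1 else 0) : ℕ) =
      (if w = a then 1 else 0) + (if w = b then 1 else 0) := by
  grind [Sym2.eq_iff]

lemma sum_degree_summand_mk (C : Finset V) (a b : V) :
    ∑ w ∈ C, ((if w ∈ s(a, b) then 1 else 0) + (if s(a, b) = s(w, w) then 1 else 0) : ℕ) =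
      (if a ∈ C then 1 else 0) + (if b ∈ C then 1 else 0) := by
  simp only [degree_summand_mk, sum_add_distrib, sum_ite_eq']

lemma sum_degree_eq_ncard_crosses_add [Fintype E] (M : Multigraph V E) (C : Finset V) :
    ∑ w ∈ C, M.degree w =
      {e | M.Crosses C e}.ncard + 2 * {e | ∀ w ∈ M.ends e, w ∈ C}.ncard := by
  classical
  have per_edge : ∀ e, ∑ w ∈ C, ((if w ∈ M.ends e then 1 else 0) +
      (if M.ends e = s(w, w) then 1 else 0) : ℕ) =
      (if M.Crosses C e then 1 else 0) + 2 * (if ∀ w ∈ M.ends e, w ∈ C then 1 else 0) := by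
    intro e
    induction h : M.ends e using Sym2.ind with
    | _ a b =>
      rw [sum_degree_summand_mk, if_congr (M.crosses_iff_of_ends_eq h) rfl rfl]
      by_cases ha : a ∈ C <;> by_cases hb : b ∈ C <;> simp [ha, hb]
  simp only [degree]
  rw [sum_comm, sum_congr rfl fun e _ => per_edge e, sum_add_distrib, ← mul_sum, sum_boole,
    sum_boole]
  simp [← Set.ncard_coe_finset]

lemma even_ncard_crosses [Fintype E] (M : Multigraph V E) (heven : ∀ w, Even (M.degree w))
    (C : Finset V) : Even {e | M.Crosses C e}.ncard := by
  have hsum : Even (∑ w ∈ C, M.degree w) := even_sum _ fun w _ => heven w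
  rw [M.sum_degree_eq_ncard_crosses_add C] at hsum
  exact (Nat.even_add.1 hsum).2 (even_two_mul _)

end Cuts

def toSimpleDeleteVertex (M : Multigraph V E) (v : V) : SimpleGraph {w : V // w ≠ v} :=
  M.toSimple.comap Subtype.val

lemma even_ncard_edges_to_component [Fintype V] [Fintype E] [DecidableEq V]
    (M : Multigraph V E) (heven : ∀ w, Even (M.degree w)) (v : V) (x : {w : V // w ≠ v}) :
    Even {e | ∃ y, (M.toSimpleDeleteVertex v).Reachable x y ∧ M.ends e = s(v, y.1)}.ncard := by
  classical
  let C : Finset V := {w | ∃ h : w ≠ v, (M.toSimpleDeleteVertex v).Reachable x ⟨w, h⟩}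
  convert M.even_ncard_crosses heven C using 2
  ext e
  simp only [Crosses, coe_filter, mem_univ, true_and, Set.mem_ofPred_eq, C]
  constructor
  · rintro ⟨y, hxy, he⟩
    exact ⟨y.1, ⟨y.2, hxy⟩, v, fun ⟨h, _⟩ => h rfl, by rw [he, Sym2.eq_swap]⟩
  · rintro ⟨a, ⟨ha, hxa⟩, b, hb, he⟩
    by_cases hbv : b = v
    · subst hbv
      exact ⟨⟨a, ha⟩, hxa, by rw [he, Sym2.eq_swap]⟩
    · refine absurd ⟨hbv, hxa.trans (SimpleGraph.Adj.reachable ?_)⟩ hb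
      exact ⟨fun hab => hb ⟨hbv, Subtype.ext hab ▸ hxa⟩, e, he⟩

section Split

variable [DecidableEq V]

def splitMap (v : V) (b : Bool) (w : V) : {w : V // w ≠ v} ⊕ Bool :=
  if h : w = v then Sum.inr b else Sum.inl ⟨w, h⟩

@[simp] lemma splitMap_self (v : V) (b : Bool) : splitMap v b v = Sum.inr b := dif_pos rfl

lemma splitMap_val (v : V) (b : Bool) (w : {w : V // w ≠ v}) :
    splitMap v b w.1 = Sum.inl w := dif_neg w.2

lemma splitMap_eq_inr_iff {v : V} {b b' : Bool} {w : V} :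
    splitMap v b w = Sum.inr b' ↔ w = v ∧ b = b' := by
  unfold splitMap
  split_ifs with h <;> simp [h]

lemma splitMap_injective (v : V) (b : Bool) : Function.Injective (splitMap v b) := by
  intro x y h
  unfold splitMap at h
  split_ifs at h <;> simp_all

variable (M : Multigraph V E) (v : V) (σ : E → Bool)

lemma splitVertex_ends (e : E) :
    (M.splitVertex v σ).ends e = (M.ends e).map (splitMap v (σ e)) := rfl

lemma splitVertex_degree_inl [Fintype E] (w : {w : V // w ≠ v}) :
    (M.splitVertex v σ).degree (Sum.inl w) = M.degree w.1 := by
  refine sum_congr rfl fun e _ => ?_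
  simp only [splitVertex_ends, ← splitMap_val v (σ e) w,
    (splitMap_injective v (σ e)).mem_sym2_map_iff,
    (splitMap_injective v (σ e)).sym2_map_eq_diag_iff]

lemma splitVertex_degree_inr [Fintype E] (hnoloop : ∀ e, M.ends e ≠ s(v, v)) (b : Bool) :
    (M.splitVertex v σ).degree (Sum.inr b) = #{e | v ∈ M.ends e ∧ σ e = b} := by
  have mem_iff (e : E) :
      Sum.inr b ∈ (M.splitVertex v σ).ends e ↔ v ∈ M.ends e ∧ σ e = b := by
    simp only [splitVertex_ends, Sym2.mem_map, splitMap_eq_inr_iff]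
    grind
  have not_loop (e : E) : (M.splitVertex v σ).ends e ≠ s(Sum.inr b, Sum.inr b) := by
    intro he
    obtain ⟨-, rfl⟩ := (mem_iff e).1 (he ▸ Sym2.mem_mk_left _ _)
    rw [← splitMap_self v (σ e), splitVertex_ends,
      (splitMap_injective v (σ e)).sym2_map_eq_diag_iff] at he
    exact hnoloop e he
  simp only [degree, mem_iff, not_loop, if_false, add_zero, sum_boole, Nat.cast_id]

lemma splitVertex_even_degree [Fintype E] (heven : ∀ w, Even (M.degree w))
    (hnoloop : ∀ e, M.ends e ≠ s(v, v)) (hσ : ∀ b, Even #{e | v ∈ M.ends e ∧ σ e = b}) :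
    ∀ u, Even ((M.splitVertex v σ).degree u)
  | Sum.inl w => (M.splitVertex_degree_inl v σ w).symm ▸ heven w.1
  | Sum.inr b => (M.splitVertex_degree_inr v σ hnoloop b).symm ▸ hσ b

open SimpleGraph

def splitVertexInlHom : M.toSimpleDeleteVertex v →g (M.splitVertex v σ).toSimple where
  toFun := Sum.inl
  map_rel' := by
    rintro x y ⟨hxy, e, he⟩
    refine ⟨Sum.inl_injective.ne (Subtype.coe_injective.ne_iff.mp hxy), e, ?_⟩
    rw [splitVertex_ends, he, Sym2.map_mk, splitMap_val, splitMap_val]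

variable {M v}

lemma splitVertex_adj_inr_inl {e : E} {x : {w : V // w ≠ v}} (he : M.ends e = s(v, x.1)) :
    (M.splitVertex v σ).toSimple.Adj (Sum.inr (σ e)) (Sum.inl x) := by
  refine ⟨Sum.inr_ne_inl, e, ?_⟩
  rw [splitVertex_ends, he, Sym2.map_mk, splitMap_self, splitMap_val]

lemma splitVertex_reachable_inr_inr {e d : E} {x y : {w : V // w ≠ v}}
    (hxy : (M.toSimpleDeleteVertex v).Reachable x y)
    (he : M.ends e = s(v, x.1)) (hd : M.ends d = s(v, y.1)) :
    (M.splitVertex v σ).toSimple.Reachable (Sum.inr (σ e)) (Sum.inr (σ d)) :=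
  (splitVertex_adj_inr_inl σ he).reachable.trans <|
    (hxy.map (M.splitVertexInlHom v σ)).trans (splitVertex_adj_inr_inl σ hd).reachable.symm

lemma splitVertex_exists_reachable_inr (hconn : M.Connected) :
    ∀ u, ∃ b, (M.splitVertex v σ).toSimple.Reachable u (Sum.inr b)
  | Sum.inr b => ⟨b, .rfl⟩
  | Sum.inl x => by
    suffices ∀ {a c : V} (_ : M.toSimple.Walk a c) (ha : a ≠ v), c = v →
        ∃ b, (M.splitVertex v σ).toSimple.Reachable (Sum.inl ⟨a, ha⟩) (Sum.inr b) from
      this (hconn.preconnected x.1 v).some x.2 rfl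
    intro a c p
    induction p with
    | nil => exact fun ha hc => absurd hc ha
    | @cons a a' c h p ih =>
      intro ha hc
      by_cases ha' : a' = v
      · subst ha'
        obtain ⟨-, e, he⟩ := h
        exact ⟨σ e, (splitVertex_adj_inr_inl σ (x := ⟨a, ha⟩)
          (he.trans Sym2.eq_swap)).reachable.symm⟩
      · obtain ⟨b, hb⟩ := ih ha' hc
        exact ⟨b, ((M.splitVertexInlHom v σ).map_adj (v := ⟨a, ha⟩) (w := ⟨a', ha'⟩)
          h).reachable.trans hb⟩

lemma splitVertex_connected_of_reachable (hconn : M.Connected)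
    (h : (M.splitVertex v σ).toSimple.Reachable (Sum.inr true) (Sum.inr false)) :
    (M.splitVertex v σ).Connected := by
  have reach_true : ∀ u, (M.splitVertex v σ).toSimple.Reachable u (Sum.inr true) := fun u => by
    obtain ⟨b, hb⟩ := splitVertex_exists_reachable_inr σ hconn u
    cases b
    exacts [hb.trans h.symm, hb]
  exact (connected_iff _).2
    ⟨fun a b => (reach_true a).trans (reach_true b).symm, ⟨Sum.inr true⟩⟩

lemma not_reachable_of_splitVertex_not_connected (hconn : M.Connected)
    (hsplit : ¬ (M.splitVertex v σ).Connected) {e d : E} {x y : {w : V // w ≠ v}}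
    (he : M.ends e = s(v, x.1)) (hd : M.ends d = s(v, y.1)) (hσ : σ e ≠ σ d) :
    ¬ (M.toSimpleDeleteVertex v).Reachable x y := by
  intro hxy
  apply hsplit (splitVertex_connected_of_reachable σ hconn _)
  have h := splitVertex_reachable_inr_inr σ hxy he hd
  revert h hσ
  cases σ e <;> cases σ d <;> simp [reachable_comm]

end Split

section DegreeFour

variable [DecidableEq V] [DecidableEq E] {M : Multigraph V E} {v : V} {e₁ a b c : E}

lemma splitVertex_pair_even_degree [Fintype E] (heven : ∀ w, Even (M.degree w))
    (hnd : [e₁, a, b, c].Nodup) (hinc : ∀ e, v ∈ M.ends e ↔ e ∈ [e₁, a, b, c])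
    (hnoloop : ∀ e, M.ends e ≠ s(v, v)) :
    ∀ u, Even ((M.splitVertex v fun e => decide (e = e₁ ∨ e = a)).degree u) := by
  refine M.splitVertex_even_degree v _ heven hnoloop fun β => ?_
  simp only [List.nodup_cons, List.mem_cons, List.not_mem_nil, or_false] at hnd
  cases β
  · rw [show ({e | v ∈ M.ends e ∧ decide (e = e₁ ∨ e = a) = false} : Finset E) =
        {b, c} by ext e; simp [hinc]; grind, card_pair (by grind)]
    exact even_two
  · rw [show ({e | v ∈ M.ends e ∧ decide (e = e₁ ∨ e = a) = true} : Finset E) =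
        {e₁, a} by ext e; simp [hinc]; grind, card_pair (by grind)]
    exact even_two

lemma eulerian_splitVertex_or [Fintype V] [Fintype E] (hM : M.Eulerian)
    (hnd : [e₁, a, b, c].Nodup) (hinc : ∀ e, v ∈ M.ends e ↔ e ∈ [e₁, a, b, c])
    (hnoloop : ∀ e, M.ends e ≠ s(v, v)) :
    (M.splitVertex v fun e => decide (e = e₁ ∨ e = a)).Eulerian ∨
      (M.splitVertex v fun e => decide (e = e₁ ∨ e = b)).Eulerian := by
  obtain ⟨hconn, heven⟩ := hM
  have hperm : [e₁, b, a, c].Perm [e₁, a, b, c] := (List.Perm.swap a b [c]).cons e₁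
  by_contra! ⟨hA, hB⟩
  replace hA := fun h => hA ⟨h, splitVertex_pair_even_degree heven hnd hinc hnoloop⟩
  replace hB := fun h => hB ⟨h, splitVertex_pair_even_degree heven (hperm.nodup_iff.2 hnd)
    (fun e => (hinc e).trans hperm.mem_iff.symm) hnoloop⟩
  have hv₁ : v ∈ M.ends e₁ := (hinc e₁).2 (by simp)
  obtain ⟨x₁, hx₁⟩ : ∃ x : {w : V // w ≠ v}, M.ends e₁ = s(v, x.1) :=
    ⟨⟨Sym2.Mem.other hv₁, fun h => hnoloop e₁ (by rw [← Sym2.other_spec hv₁, h])⟩,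
      (Sym2.other_spec hv₁).symm⟩
  simp only [List.nodup_cons, List.mem_cons, List.not_mem_nil, or_false] at hnd
  have hcut : {e | ∃ y, (M.toSimpleDeleteVertex v).Reachable x₁ y ∧ M.ends e = s(v, y.1)} =
      {e₁} := by
    ext e
    refine ⟨fun ⟨y, hy, he⟩ => ?_, ?_⟩
    swap
    · rintro rfl
      exact ⟨x₁, .rfl, hx₁⟩
    have hmem := (hinc e).1 (he ▸ Sym2.mem_mk_left _ _)
    simp only [List.mem_cons, List.not_mem_nil, or_false] at hmem
    rcases hmem with rfl | rfl | rfl | rfl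
    · rfl
    · exact absurd hy (not_reachable_of_splitVertex_not_connected _ hconn hB hx₁ he (by grind))
    · exact absurd hy (not_reachable_of_splitVertex_not_connected _ hconn hA hx₁ he (by grind))
    · exact absurd hy (not_reachable_of_splitVertex_not_connected _ hconn hA hx₁ he (by grind))
  have hodd := M.even_ncard_edges_to_component heven v x₁
  rw [hcut, Set.ncard_singleton] at hodd
  exact Nat.not_even_one hodd

end DegreeFour

end Multigraph

/-- If `v` is a vertex of degree 4 of a finite Eulerian multigraph,
with incident edges `e₁, e₂, e₃, e₄` and no loop at `v`, then among the three splits of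
`v` into two vertices of degree 2 at least two are Eulerian. -/
theorem stmt_12 {V : Type u} {E : Type w} [Fintype V] [Fintype E] [DecidableEq V]
    [DecidableEq E] (M : Multigraph V E) (hM : M.Eulerian) (v : V) (e₁ e₂ e₃ e₄ : E)
    (hnd : ([e₁, e₂, e₃, e₄] : List E).Nodup)
    (hinc : ∀ e : E, v ∈ M.ends e ↔ e ∈ [e₁, e₂, e₃, e₄])
    (hnoloop : ∀ e : E, M.ends e ≠ s(v, v)) :
    let split : E → Multigraph ({w : V // w ≠ v} ⊕ Bool) E := fun e' =>
      M.splitVertex v fun e => decide (e = e₁ ∨ e = e')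
    ((split e₂).Eulerian ∧ (split e₃).Eulerian) ∨
      ((split e₂).Eulerian ∧ (split e₄).Eulerian) ∨
        ((split e₃).Eulerian ∧ (split e₄).Eulerian) := by
  intro split
  have h₂₄₃ : [e₁, e₂, e₄, e₃].Perm [e₁, e₂, e₃, e₄] :=
    ((List.Perm.swap e₃ e₄ []).cons e₂).cons e₁
  have h₃₄₂ : [e₁, e₃, e₄, e₂].Perm [e₁, e₂, e₃, e₄] :=
    (List.perm_append_comm (l₁ := [e₃, e₄]) (l₂ := [e₂])).cons e₁
  have h₂₃ := Multigraph.eulerian_splitVertex_or hM hnd hinc hnoloop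
  have h₂₄ := Multigraph.eulerian_splitVertex_or hM (h₂₄₃.nodup_iff.2 hnd)
    (fun e => (hinc e).trans h₂₄₃.mem_iff.symm) hnoloop
  have h₃₄ := Multigraph.eulerian_splitVertex_or hM (h₃₄₂.nodup_iff.2 hnd)
    (fun e => (hinc e).trans h₃₄₂.mem_iff.symm) hnoloop
  tauto
end

section
/- Let G be a finite 2-connected graph not containing K^4 or K_{2,3} as a minor and not isomorphic to K^3, and let e = uv be an edge of G not on the Hamilton cycle of G. Then the vertex of G/e obtained by contracting e is a cutvertex of G/e; in particular e is not 2-contractible. -/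
/-!
Rotate the Hamilton cycle to start at `u` and split it at `v` into two arcs; since `uv` is not
a cycle edge, each arc has an interior vertex. An edge of `G` between the interiors of the two
arcs would be a chord crossing `uv`, and two crossing chords of a cycle yield a `K⁴` minor.
So the interiors are separated in `G - u - v`, which is `G/uv` minus the contracted vertex.
-/

open SimpleGraph

universe u w

section

variable {V : Type u} {G : SimpleGraph V}

theorem isMinor_of_branch_lists {n : ℕ} {H : SimpleGraph (Fin n)} (B : Fin n → List V)
    (hconn : ∀ i, (G.induce {x | x ∈ B i}).Connected)
    (hdisj : ∀ ⦃i j⦄, i < j → (B i).Disjoint (B j))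
    (hadj : ∀ ⦃i j⦄, i < j → H.Adj i j → ∃ x ∈ B i, ∃ y ∈ B j, G.Adj x y) :
    IsMinor G H := by
  refine ⟨fun i => {x | x ∈ B i}, fun i => ?_, hconn, fun i j hij => ?_, fun i j hij => ?_⟩
  · obtain ⟨⟨x, hx⟩⟩ := (hconn i).nonempty
    exact ⟨x, hx⟩
  · rcases hij.lt_or_gt with h | h
    · exact Set.disjoint_left.mpr fun x hi hj => hdisj h hi hj
    · exact Set.disjoint_left.mpr fun x hi hj => hdisj h hj hi
  · rcases hij.ne.lt_or_gt with h | h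
    · exact hadj h hij
    · obtain ⟨x, hx, y, hy, hxy⟩ := hadj h hij.symm
      exact ⟨y, hy, x, hx, hxy.symm⟩

theorem not_connected_of_forall_adj_mem {W : Type w} {H : SimpleGraph W} (S : Set W)
    (hS : ∀ ⦃a b⦄, H.Adj a b → a ∈ S → b ∈ S) {x y : W} (hx : x ∈ S) (hy : y ∉ S) :
    ¬ H.Connected := fun hH => by
  obtain ⟨d, -, hd, hd'⟩ := (hH.preconnected x y).some.exists_boundary_dart S hx hy
  exact hd' (hS d.adj hd)

theorem SimpleGraph.Walk.IsCycle.eq_or_eq_of_mem_support_of_mem_support {u v x : V}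
    {q₁ : G.Walk u v} {q₂ : G.Walk v u} (hq : (q₁.append q₂).IsCycle)
    (h₁ : x ∈ q₁.support) (h₂ : x ∈ q₂.support) : x = u ∨ x = v := by
  have hdisj := List.disjoint_of_nodup_append (Walk.tail_support_append q₁ q₂ ▸ hq.support_nodup)
  rw [← Walk.cons_tail_support, List.mem_cons] at h₁ h₂
  rcases h₁ with rfl | h₁
  · exact .inl rfl
  rcases h₂ with rfl | h₂
  · exact .inr rfl
  exact (hdisj h₁ h₂).elim

theorem SimpleGraph.Walk.snd_ne_of_not_mem_edges {u v : V} (w : G.Walk u v) (huv : u ≠ v)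
    (h : s(u, v) ∉ w.edges) : w.snd ≠ v := fun hv => by
  have := w.mk_start_snd_mem_edges (Walk.not_nil_of_ne huv)
  rw [hv] at this
  exact h this

theorem isMinor_K4_of_crossing_chords [DecidableEq V] {u v x y : V} {q₁ : G.Walk u v}
    {q₂ : G.Walk v u} (hq : (q₁.append q₂).IsCycle) (huv : G.Adj u v) (hxy : G.Adj x y)
    (hx : x ∈ q₁.support) (hxu : x ≠ u) (hxv : x ≠ v)
    (hy : y ∈ q₂.support) (hyu : y ≠ u) (hyv : y ≠ v) : IsMinor G K4 := by
  set r₁ := q₁.takeUntil x hx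
  set r₂ := q₁.dropUntil x hx
  set r₃ := q₂.takeUntil y hy
  set r₄ := q₂.dropUntil y hy
  have h₁ : ¬ r₁.Nil := Walk.not_nil_of_ne hxu.symm
  have h₂ : ¬ r₂.Nil := Walk.not_nil_of_ne hxv
  have h₃ : ¬ r₃.Nil := Walk.not_nil_of_ne hyv.symm
  have h₄ : ¬ r₄.Nil := Walk.not_nil_of_ne hyu
  have hnodup : (r₁.dropLast.support ++ r₂.dropLast.support ++ r₃.dropLast.support ++
      r₄.dropLast.support).Nodup := by
    have := hq.nodup_dropLast_support
    rw [← q₁.take_spec hx, ← q₂.take_spec hy] at this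
    simpa [-Walk.take_spec, Walk.support_append_eq_support_dropLast_append,
      List.dropLast_append_of_ne_nil, h₁, h₂, h₃, h₄] using this
  -- Branch sets: the arcs of the cycle from `u` to `x`, `x` to `v`, `v` to `y` and `y` to `u`,
  -- each without its last vertex.
  refine isMinor_of_branch_lists ![r₁.dropLast.support, r₂.dropLast.support,
    r₃.dropLast.support, r₄.dropLast.support] (fun i => ?_) (fun i j hij => ?_) ?_
  · fin_cases i <;> exact Walk.connected_induce_support _
  · have hpw := (List.nodup_flatten (L := List.ofFn ![r₁.dropLast.support,
      r₂.dropLast.support, r₃.dropLast.support, r₄.dropLast.support]) |>.mp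
      (by simpa [List.ofFn_succ] using hnodup)).2
    exact List.pairwise_ofFn.mp hpw hij
  · intro i j hij _
    fin_cases i <;> fin_cases j <;> try exact absurd hij (by decide)
    · exact ⟨_, Walk.end_mem_support _, x, Walk.start_mem_support _, Walk.adj_penultimate h₁⟩
    · exact ⟨u, Walk.start_mem_support _, v, Walk.start_mem_support _, huv⟩
    · exact ⟨u, Walk.start_mem_support _, _, Walk.end_mem_support _,
        (Walk.adj_penultimate h₄).symm⟩
    · exact ⟨_, Walk.end_mem_support _, v, Walk.start_mem_support _, Walk.adj_penultimate h₂⟩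
    · exact ⟨x, Walk.start_mem_support _, y, Walk.start_mem_support _, hxy⟩
    · exact ⟨_, Walk.end_mem_support _, y, Walk.start_mem_support _, Walk.adj_penultimate h₃⟩

theorem contractEdge_adj_iff_of_ne {u v : V} {a b : {w : V // w ≠ v}} (ha : a.1 ≠ u)
    (hb : b.1 ≠ u) : (contractEdge G u v).Adj a b ↔ G.Adj a b := by
  simp only [contractEdge, ha, hb, false_and, or_false]
  exact ⟨And.right, fun h => ⟨h.ne, h⟩⟩

theorem not_connected_contractEdge_induce_of_isHamiltonianCycle [DecidableEq V]
    (hK4 : ¬ IsMinor G K4) {u v : V} (huv : G.Adj u v) {q₁ : G.Walk u v} {q₂ : G.Walk v u}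
    (hq : (q₁.append q₂).IsHamiltonianCycle) (h₁ : s(u, v) ∉ q₁.edges)
    (h₂ : s(v, u) ∉ q₂.edges) :
    ¬ ((contractEdge G u v).induce {w | w ≠ (⟨u, huv.ne⟩ : {w : V // w ≠ v})}).Connected := by
  have hx₀u : q₁.snd ≠ u := (q₁.adj_snd (Walk.not_nil_of_ne huv.ne)).ne.symm
  have hx₀v : q₁.snd ≠ v := q₁.snd_ne_of_not_mem_edges huv.ne h₁
  have hy₀u : q₂.snd ≠ u := q₂.snd_ne_of_not_mem_edges huv.ne.symm h₂
  have hy₀v : q₂.snd ≠ v := (q₂.adj_snd (Walk.not_nil_of_ne huv.ne.symm)).ne.symm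
  refine not_connected_of_forall_adj_mem {w | w.1.1 ∈ q₁.support} ?_
    (x := ⟨⟨q₁.snd, hx₀v⟩, fun h => hx₀u congr($h.1)⟩)
    (y := ⟨⟨q₂.snd, hy₀v⟩, fun h => hy₀u congr($h.1)⟩) (q₁.getVert_mem_support 1) ?_
  · rintro ⟨⟨a, hav⟩, hau⟩ ⟨⟨b, hbv⟩, hbu⟩ hab ha
    by_contra hb
    have hb₂ : b ∈ q₂.support := by
      have := hq.mem_support b
      rw [Walk.mem_support_append_iff] at this
      exact this.resolve_left hb
    have hau : a ≠ u := fun h => hau (Subtype.ext h)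
    have hbu : b ≠ u := fun h => hbu (Subtype.ext h)
    exact hK4 (isMinor_K4_of_crossing_chords hq.isCycle huv
      ((contractEdge_adj_iff_of_ne hau hbu).mp hab) ha hau hav hb₂ hbu hbv)
  · intro hy
    rcases hq.isCycle.eq_or_eq_of_mem_support_of_mem_support hy (q₂.getVert_mem_support 1)
      with h | h
    exacts [hy₀u h, hy₀v h]

end

theorem stmt_15_general {V : Type u} [DecidableEq V] (G : SimpleGraph V)
    (hK4 : ¬ IsMinor G K4)
    (a : V) (p : G.Walk a a) (hp : p.IsHamiltonianCycle)
    (u v : V) (huv : G.Adj u v) (he : s(u, v) ∉ p.edges) :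
    ¬ ((contractEdge G u v).induce
        {w | w ≠ (⟨u, huv.ne⟩ : {w : V // w ≠ v})}).Connected ∧
      ¬ TwoConnected (contractEdge G u v) := by
  set q := p.rotate u (hp.mem_support u)
  have hq : q.IsHamiltonianCycle := hp.rotate _
  have he' : s(u, v) ∉ q.edges := fun h => he ((p.rotate_edges u _).mem_iff.mp h)
  have hv := hq.mem_support v
  have hcut := not_connected_contractEdge_induce_of_isHamiltonianCycle hK4 huv
    (q₁ := q.takeUntil v hv) (q₂ := q.dropUntil v hv) (by rwa [q.take_spec hv])
    (fun h => he' (q.edges_takeUntil_subset_edges hv h))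
    (fun h => he' (Sym2.eq_swap ▸ q.edges_dropUntil_subset_edges hv h))
  exact ⟨hcut, fun h => hcut (h.2 _)⟩

/-- Let `G` be a finite 2-connected graph without `K⁴` or `K_{2,3}`
minors, not isomorphic to `K³`, and let `uv` be an edge not on the Hamilton cycle of
`G`. Then the vertex of `G/uv` obtained by the contraction is a cutvertex of `G/uv`;
in particular `uv` is not 2-contractible. -/
theorem stmt_15 {V : Type u} [Fintype V] [DecidableEq V] (G : SimpleGraph V) (h2 : TwoConnected G)
    (hK4 : ¬ IsMinor G K4) (hK23 : ¬ IsMinor G K23)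
    (hK3 : ¬ Nonempty (G ≃g completeGraph (Fin 3)))
    (a : V) (p : G.Walk a a) (hp : p.IsHamiltonianCycle)
    (u v : V) (huv : G.Adj u v) (he : s(u, v) ∉ p.edges) :
    ¬ ((contractEdge G u v).induce
        {w | w ≠ (⟨u, huv.ne⟩ : {w : V // w ≠ v})}).Connected ∧
      ¬ TwoConnected (contractEdge G u v) :=
  stmt_15_general G hK4 a p hp u v huv he
end

section
/- In a finite 2-connected outerplanar graph G with Hamilton cycle C, every edge of E(G) \ E(C), when contracted, produces a cutvertex, so the 2-contractible edges of G are exactly the edges of C (unless G ≅ K^3). -/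
open SimpleGraph

universe u w

namespace Stmt18Aux
open SimpleGraph Walk

variable {V : Type u} [DecidableEq V] {G : SimpleGraph V}

lemma support_split {c d b : V} (r : G.Walk c d) (hb : b ∈ r.support) :
    r.support = (r.takeUntil b hb).support ++ (r.dropUntil b hb).support.tail := by
  conv_lhs => rw [← take_spec r hb]
  exact support_append _ _

lemma takeUntil_support_nodup {c d b : V} (r : G.Walk c d) (hnd : r.support.Nodup)
    (hb : b ∈ r.support) : (r.takeUntil b hb).support.Nodup := by
  rw [support_split r hb, List.nodup_append] at hnd
  exact hnd.1

lemma dropUntil_support_nodup {c d b : V} (r : G.Walk c d) (hnd : r.support.Nodup)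
    (hb : b ∈ r.support) : (r.dropUntil b hb).support.Nodup := by
  rw [support_split r hb, List.nodup_append] at hnd
  rw [support_eq_cons (r.dropUntil b hb), List.nodup_cons]
  exact ⟨fun hmem => hnd.2.2 _ ((r.takeUntil b hb).end_mem_support) _ hmem rfl, hnd.2.1⟩

lemma end_not_mem_takeUntil {c d b : V} (r : G.Walk c d) (hnd : r.support.Nodup)
    (hb : b ∈ r.support) (hdb : d ≠ b) : d ∉ (r.takeUntil b hb).support := by
  rw [support_split r hb, List.nodup_append] at hnd
  intro hmem
  have hd : d ∈ (r.dropUntil b hb).support.tail := by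
    have := (r.dropUntil b hb).end_mem_support
    rw [support_eq_cons (r.dropUntil b hb)] at this
    rcases List.mem_cons.mp this with h | h
    · exact absurd h hdb
    · exact h
  exact hnd.2.2 _ hmem _ hd rfl

lemma start_not_mem_dropUntil {c d b : V} (r : G.Walk c d) (hnd : r.support.Nodup)
    (hb : b ∈ r.support) (hcb : c ≠ b) : c ∉ (r.dropUntil b hb).support := by
  rw [support_split r hb, List.nodup_append] at hnd
  intro hmem
  rw [support_eq_cons (r.dropUntil b hb)] at hmem
  rcases List.mem_cons.mp hmem with h | h
  · exact hcb h
  · exact hnd.2.2 _ (r.takeUntil b hb).start_mem_support _ h rfl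

end Stmt18Aux

namespace Stmt18Aux
variable {V : Type u} [DecidableEq V] {G : SimpleGraph V}
open SimpleGraph Walk

lemma firstEdge {t s : V} (w : G.Walk t s) (hnd : w.support.Nodup) {e : Sym2 V}
    (he : e ∈ w.edges) (ht : t ∈ e) :
    ∃ (u' : V) (h1 : G.Adj t u') (w' : G.Walk u' s), w = Walk.cons h1 w' ∧ e = s(t, u') := by
  cases w with
  | nil => simp at he
  | @cons _ m _ h1 w' =>
    rw [edges_cons, List.mem_cons] at he
    rcases he with he | he
    · exact ⟨m, h1, w', rfl, he⟩
    · exfalso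
      obtain ⟨z, rfl⟩ := Sym2.mem_iff_exists.mp ht
      have : t ∈ w'.support := w'.fst_mem_support_of_mem_edges he
      rw [support_cons, List.nodup_cons] at hnd
      exact hnd.1 this

lemma split {a x y : V} {p : G.Walk a a} (hp : p.IsHamiltonianCycle)
    (he : s(x, y) ∈ p.edges) :
    ∃ r : G.Walk y x, r.support.Nodup ∧ ∀ w, w ∈ r.support := by
  have hxy : x ≠ y := (p.adj_of_mem_edges he).ne
  have hxs : x ∈ p.support := hp.mem_support x
  have hqc : (p.rotate x hxs).IsCycle := hp.isCycle.rotate hxs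
  have hqe : s(x, y) ∈ (p.rotate x hxs).edges := (p.rotate_edges x hxs).perm.mem_iff.mpr he
  have hcov : ∀ w, w ∈ (p.rotate x hxs).support.tail := by
    intro w
    refine (p.support_rotate x hxs).perm.mem_iff.mpr ?_
    rw [← support_tail_of_not_nil p hp.isCycle.not_nil]
    exact hp.isHamiltonian_tail.mem_support w
  have hnd : (p.rotate x hxs).support.tail.Nodup := hqc.support_nodup
  obtain ⟨w1, h1, r₀, hq⟩ := not_nil_iff.mp hqc.not_nil
  have hsupp : (p.rotate x hxs).support = x :: r₀.support := by rw [hq, support_cons]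
  have hr₀nd : r₀.support.Nodup := by rw [hsupp] at hnd; exact hnd
  have hr₀cov : ∀ w, w ∈ r₀.support := by
    intro w; have := hcov w; rw [hsupp] at this; exact this
  by_cases hyw : y = w1
  · subst hyw; exact ⟨r₀, hr₀nd, hr₀cov⟩
  · have her : s(x, y) ∈ r₀.edges := by
      rw [hq, edges_cons, List.mem_cons] at hqe
      rcases hqe with h | h
      · exfalso
        rw [Sym2.eq_iff] at h
        rcases h with ⟨-, h⟩ | ⟨h, h'⟩
        · exact hyw h
        · exact hxy h'.symm
      · exact h
    have hrevnd : r₀.reverse.support.Nodup := by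
      rw [support_reverse]; exact List.nodup_reverse.mpr hr₀nd
    have herev : s(x, y) ∈ r₀.reverse.edges := by
      rw [edges_reverse, List.mem_reverse]; exact her
    obtain ⟨u', h2, w₂, heq, he2⟩ := firstEdge r₀.reverse hrevnd herev (Sym2.mem_mk_left x y)
    have hu' : u' = y := by
      rw [Sym2.eq_iff] at he2
      rcases he2 with ⟨-, h⟩ | ⟨-, h⟩
      · exact h.symm
      · exact absurd h.symm hxy
    subst hu'
    refine ⟨w₂.append (Walk.cons h1.symm Walk.nil), ?_, ?_⟩
    · have hxsup : (x :: w₂.support) = r₀.support.reverse := by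
        rw [← support_reverse, heq, support_cons]
      have : (x :: w₂.support).Nodup := by rw [hxsup]; exact List.nodup_reverse.mpr hr₀nd
      rw [List.nodup_cons] at this
      rw [support_append]
      simp only [support_cons, support_nil, List.tail_cons]
      rw [List.nodup_append]
      refine ⟨this.2, List.nodup_singleton x, ?_⟩
      intro z hz z' hz' hzz'
      rw [List.mem_singleton] at hz'
      subst hz'
      subst hzz'
      exact this.1 hz
    · intro w
      rw [support_append]
      simp only [support_cons, support_nil, List.tail_cons]
      rw [List.mem_append, List.mem_singleton]
      by_cases hwx : w = x
      · exact Or.inr hwx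
      · left
        have hw : w ∈ r₀.support.reverse := by rw [List.mem_reverse]; exact hr₀cov w
        rw [← support_reverse, heq, support_cons, List.mem_cons] at hw
        rcases hw with h | h
        · exact absurd h hwx
        · exact h

end Stmt18Aux

namespace Stmt18Aux
variable {V : Type u} [DecidableEq V] {G : SimpleGraph V}
open SimpleGraph Walk

set_option linter.unusedSectionVars false

lemma two_nbrs {a : V} {p : G.Walk a a} (hp : p.IsHamiltonianCycle) (u : V) :
    ∃ w1 w2 : V, w1 ≠ w2 ∧ s(u, w1) ∈ p.edges ∧ s(u, w2) ∈ p.edges := by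
  have hus : u ∈ p.support := hp.mem_support u
  have hqc : (p.rotate u hus).IsCycle := hp.isCycle.rotate hus
  have hnd : (p.rotate u hus).support.tail.Nodup := hqc.support_nodup
  have hqe : (p.rotate u hus).edges.Nodup := hqc.edges_nodup
  obtain ⟨w1, h1, r₀, hq⟩ := not_nil_iff.mp hqc.not_nil
  have hr₀nd : r₀.support.Nodup := by
    have hsupp : (p.rotate u hus).support = u :: r₀.support := by rw [hq, support_cons]
    rw [hsupp] at hnd; exact hnd
  have hrev : ¬ r₀.reverse.Nil := by
    rw [nil_iff_length_eq, length_reverse, ← nil_iff_length_eq]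
    exact not_nil_of_ne (fun h => h1.ne h.symm)
  obtain ⟨w2, h2, w₂, heq⟩ := not_nil_iff.mp hrev
  have he2 : s(u, w2) ∈ r₀.edges := by
    have : s(u, w2) ∈ r₀.reverse.edges := by rw [heq, edges_cons]; exact List.mem_cons_self
    rw [edges_reverse, List.mem_reverse] at this; exact this
  have hne : w1 ≠ w2 := by
    intro h; subst h
    rw [hq, edges_cons, List.nodup_cons] at hqe
    exact hqe.1 he2
  have hmem : ∀ e ∈ (p.rotate u hus).edges, e ∈ p.edges :=
    fun e h => (p.rotate_edges u hus).perm.mem_iff.mp h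
  refine ⟨w1, w2, hne, ?_, ?_⟩
  · exact hmem _ (by rw [hq, edges_cons]; exact List.mem_cons_self)
  · exact hmem _ (by rw [hq, edges_cons, List.mem_cons]; exact Or.inr he2)

variable {f : V → ℕ}

lemma chain (hinj : Function.Injective f)
    (HO : ∀ a b c d : V, G.Adj a b → G.Adj c d → ¬(f a < f c ∧ f c < f b ∧ f b < f d))
    {x y : V} (hxy : G.Adj x y) (hf : f x < f y) :
    ∀ {c d : V} (r : G.Walk c d), (∀ z ∈ r.support, z ≠ x ∧ z ≠ y) →
      f x < f c ∧ f c < f y → f x < f d ∧ f d < f y := by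
  intro c d r
  induction r with
  | nil => exact fun _ h => h
  | @cons c m d h r ih =>
    intro hsup hc
    have hm : m ≠ x ∧ m ≠ y := hsup m (by rw [support_cons]; exact List.mem_cons_of_mem _ r.start_mem_support)
    have hmx : f m ≠ f x := fun hh => hm.1 (hinj hh)
    have hmy : f m ≠ f y := fun hh => hm.2 (hinj hh)
    have hmid : f x < f m ∧ f m < f y := by
      rcases lt_trichotomy (f m) (f x) with h' | h' | h'
      · exact absurd ⟨h', hc.1, hc.2⟩ (HO m c x y h.symm hxy)
      · exact absurd h' hmx
      · rcases lt_trichotomy (f m) (f y) with h'' | h'' | h''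
        · exact ⟨h', h''⟩
        · exact absurd h'' hmy
        · exact absurd ⟨hc.1, hc.2, h''⟩ (HO x y c m hxy h)
    exact ih (fun z hz => hsup z (by rw [support_cons]; exact List.mem_cons_of_mem _ hz)) hmid

lemma claimD (hinj : Function.Injective f)
    (HO : ∀ a b c d : V, G.Adj a b → G.Adj c d → ¬(f a < f c ∧ f c < f b ∧ f b < f d))
    {a : V} {p : G.Walk a a} (hp : p.IsHamiltonianCycle) {x y : V}
    (he : s(x, y) ∈ p.edges) (hf : f x < f y) {c d : V}
    (hc : f x < f c ∧ f c < f y) (hd : f d < f x ∨ f y < f d) : False := by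
  have hadj : G.Adj x y := p.adj_of_mem_edges he
  obtain ⟨r, hnd, hcov⟩ := split hp he
  -- r : G.Walk y x
  have hcx : c ≠ x := fun h => by subst h; exact lt_irrefl _ hc.1
  have hcy : c ≠ y := fun h => by subst h; exact lt_irrefl _ hc.2
  have hdx : d ≠ x := by
    rintro rfl
    rcases hd with h | h
    · exact lt_irrefl _ h
    · exact lt_asymm hf h
  have hdy : d ≠ y := by
    rintro rfl
    rcases hd with h | h
    · exact lt_asymm hf h
    · exact lt_irrefl _ h
  have hcr : c ∈ r.support := hcov c
  have hdr : d ∈ r.support := hcov d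
  have hdsplit : d ∈ (r.takeUntil c hcr).support ∨ d ∈ (r.dropUntil c hcr).support.tail := by
    rw [support_split r hcr, List.mem_append] at hdr; exact hdr
  have hbet : f x < f d ∧ f d < f y := by
    rcases hdsplit with hdA | hdB
    · -- d is in the first part; segment from d to c
      set A := r.takeUntil c hcr with hA
      have hAnd : A.support.Nodup := takeUntil_support_nodup r hnd hcr
      have seg := A.dropUntil d hdA
      have hcond : ∀ z ∈ (A.dropUntil d hdA).support, z ≠ x ∧ z ≠ y := by
        intro z hz
        constructor
        · intro hzx; subst hzx
          exact end_not_mem_takeUntil r hnd hcr (fun h => hcx h.symm) (support_dropUntil_subset A hdA hz)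
        · intro hzy; subst hzy
          exact start_not_mem_dropUntil A hAnd hdA (fun h => hdy h.symm) hz
      have := chain hinj HO hadj hf (A.dropUntil d hdA).reverse
        (fun z hz => hcond z (by rwa [support_reverse, List.mem_reverse] at hz)) hc
      exact this
    · have hdB' : d ∈ (r.dropUntil c hcr).support := by
        rw [support_eq_cons (r.dropUntil c hcr)]; exact List.mem_cons_of_mem _ hdB
      set B := r.dropUntil c hcr with hB
      have hBnd : B.support.Nodup := dropUntil_support_nodup r hnd hcr
      have hcond : ∀ z ∈ (B.takeUntil d hdB').support, z ≠ x ∧ z ≠ y := by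
        intro z hz
        constructor
        · intro hzx; subst hzx
          exact end_not_mem_takeUntil B hBnd hdB' (fun h => hdx h.symm) hz
        · intro hzy; subst hzy
          have : z ∈ B.support := support_takeUntil_subset B hdB' hz
          exact start_not_mem_dropUntil r hnd hcr (fun h => hcy h.symm) this
      exact chain hinj HO hadj hf (B.takeUntil d hdB') hcond hc
  rcases hd with h | h
  · exact lt_asymm h hbet.1
  · exact lt_asymm h hbet.2

end Stmt18Aux

namespace Stmt18Aux
variable {V : Type u} [DecidableEq V] {G : SimpleGraph V} {f : V → ℕ}
open SimpleGraph Walk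
set_option linter.unusedSectionVars false

lemma exists_between (hinj : Function.Injective f)
    (HO : ∀ a b c d : V, G.Adj a b → G.Adj c d → ¬(f a < f c ∧ f c < f b ∧ f b < f d))
    {a : V} {p : G.Walk a a} (hp : p.IsHamiltonianCycle) {u v : V}
    (huv : G.Adj u v) (hne : s(u, v) ∉ p.edges) (hf : f u < f v) :
    ∃ w : V, f u < f w ∧ f w < f v := by
  by_contra hno
  push_neg at hno
  obtain ⟨w1, w2, h12, he1, he2⟩ := two_nbrs hp u
  have side : ∀ w : V, s(u, w) ∈ p.edges → f w < f u ∨ f v < f w := by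
    intro w hw
    have hwu : w ≠ u := fun h => by subst h; exact (p.adj_of_mem_edges hw).ne' rfl
    have hwv : w ≠ v := fun h => by subst h; exact hne hw
    rcases lt_trichotomy (f w) (f u) with h | h | h
    · exact Or.inl h
    · exact absurd (hinj h) hwu
    · have := hno w h
      rcases lt_or_eq_of_le this with h' | h'
      · exact Or.inr h'
      · exact absurd (hinj h'.symm) hwv
  have key : ∀ z1 z2 : V, s(u, z1) ∈ p.edges → s(u, z2) ∈ p.edges → f z1 < f z2 → False := by
    intro z1 z2 hz1 hz2 hlt
    rcases side z1 hz1 with hs1 | hs1 <;> rcases side z2 hz2 with hs2 | hs2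
    · -- both below u : claimD on edge (z1, u), inside z2, outside v
      exact claimD hinj HO hp (by rwa [Sym2.eq_swap] at hz1) hs1 ⟨hlt, hs2⟩ (Or.inr hf)
    · -- z1 below, z2 above v : claimD on edge (u, z2), inside v, outside z1
      exact claimD hinj HO hp hz2 (lt_trans hf hs2) ⟨hf, hs2⟩ (Or.inl hs1)
    · -- z1 above v, z2 below u: then f z2 < f u < f v < f z1 contradicts hlt
      exact lt_asymm hlt (lt_trans (lt_trans hs2 hf) hs1)
    · -- both above v : claimD on edge (u, z1), inside v, outside z2
      exact claimD hinj HO hp hz1 (lt_trans hf hs1) ⟨hf, hs1⟩ (Or.inr hlt)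
  have h12' : f w1 ≠ f w2 := fun h => h12 (hinj h)
  rcases h12'.lt_or_gt with h | h
  · exact key w1 w2 he1 he2 h
  · exact key w2 w1 he2 he1 h

lemma exists_outside (hinj : Function.Injective f)
    (HO : ∀ a b c d : V, G.Adj a b → G.Adj c d → ¬(f a < f c ∧ f c < f b ∧ f b < f d))
    {a : V} {p : G.Walk a a} (hp : p.IsHamiltonianCycle) {u v : V}
    (huv : G.Adj u v) (hne : s(u, v) ∉ p.edges) (hf : f u < f v) :
    ∃ w : V, f w < f u ∨ f v < f w := by
  by_contra hno
  push_neg at hno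
  obtain ⟨w1, w2, h12, he1, he2⟩ := two_nbrs hp u
  have side : ∀ w : V, s(u, w) ∈ p.edges → f u < f w ∧ f w < f v := by
    intro w hw
    have hwu : w ≠ u := fun h => by subst h; exact (p.adj_of_mem_edges hw).ne' rfl
    have hwv : w ≠ v := fun h => by subst h; exact hne hw
    obtain ⟨h1, h2⟩ := hno w
    constructor
    · rcases lt_or_eq_of_le h1 with h | h
      · exact h
      · exact absurd (hinj h.symm) hwu
    · rcases lt_or_eq_of_le h2 with h | h
      · exact h
      · exact absurd (hinj h) hwv
  have key : ∀ z1 z2 : V, s(u, z1) ∈ p.edges → s(u, z2) ∈ p.edges → f z1 < f z2 → False := by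
    intro z1 z2 hz1 hz2 hlt
    exact claimD hinj HO hp hz2 (side z2 hz2).1 ⟨(side z1 hz1).1, hlt⟩ (Or.inr (side z2 hz2).2)
  have h12' : f w1 ≠ f w2 := fun h => h12 (hinj h)
  rcases h12'.lt_or_gt with h | h
  · exact key w1 w2 he1 he2 h
  · exact key w2 w1 he2 he1 h

end Stmt18Aux

namespace Stmt18Aux
variable {V : Type u} [DecidableEq V] {G : SimpleGraph V} {f : V → ℕ}
open SimpleGraph Walk
set_option linter.unusedSectionVars false

lemma walk_stays (hinj : Function.Injective f)
    (HO : ∀ a b c d : V, G.Adj a b → G.Adj c d → ¬(f a < f c ∧ f c < f b ∧ f b < f d))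
    {u v u₀ v₀ : V} (huv : G.Adj u v) (h₀ : G.Adj u₀ v₀) (hf₀ : f u₀ < f v₀)
    (hvals : ∀ w : V, w ≠ u → w ≠ v → w ≠ u₀ ∧ w ≠ v₀)
    {α β : {w : {w : V // w ≠ v} // w ∈ {w : {w : V // w ≠ v} | w ≠ (⟨u, huv.ne⟩ : {w : V // w ≠ v})}}}
    (W : ((contractEdge G u v).induce {w | w ≠ (⟨u, huv.ne⟩ : {w : V // w ≠ v})}).Walk α β) :
    f u₀ < f α.1.1 ∧ f α.1.1 < f v₀ → f u₀ < f β.1.1 ∧ f β.1.1 < f v₀ := by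
  induction W with
  | nil => exact id
  | @cons α m β hadj W ih =>
    intro hα
    have hK : (contractEdge G u v).Adj α.1 m.1 := hadj
    have hαu : (α.1 : V) ≠ u := fun h => α.2 (Subtype.ext h)
    have hmu : (m.1 : V) ≠ u := fun h => m.2 (Subtype.ext h)
    have hG : G.Adj α.1.1 m.1.1 := by
      rcases hK.2 with h | ⟨h, -⟩ | ⟨h, -⟩
      · exact h
      · exact absurd h hαu
      · exact absurd h hmu
    have hm := hvals m.1.1 hmu m.1.2
    have hm0 : f m.1.1 ≠ f u₀ := fun h => hm.1 (hinj h)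
    have hm1 : f m.1.1 ≠ f v₀ := fun h => hm.2 (hinj h)
    refine ih ?_
    rcases lt_trichotomy (f m.1.1) (f u₀) with h' | h' | h'
    · exact absurd ⟨h', hα.1, hα.2⟩ (HO m.1.1 α.1.1 u₀ v₀ hG.symm h₀)
    · exact absurd h' hm0
    · rcases lt_trichotomy (f m.1.1) (f v₀) with h'' | h'' | h''
      · exact ⟨h', h''⟩
      · exact absurd h'' hm1
      · exact absurd ⟨hα.1, hα.2, h''⟩ (HO u₀ v₀ α.1.1 m.1.1 h₀ hG)

lemma partA (hinj : Function.Injective f)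
    (HO : ∀ a b c d : V, G.Adj a b → G.Adj c d → ¬(f a < f c ∧ f c < f b ∧ f b < f d))
    {a : V} {p : G.Walk a a} (hp : p.IsHamiltonianCycle) {u v : V}
    (huv : G.Adj u v) (hne : s(u, v) ∉ p.edges) :
    ¬ ((contractEdge G u v).induce {w | w ≠ (⟨u, huv.ne⟩ : {w : V // w ≠ v})}).Connected := by
  intro hcon
  have main : ∀ u₀ v₀ : V, G.Adj u₀ v₀ → s(u₀, v₀) ∉ p.edges → f u₀ < f v₀ →
      (∀ w : V, w ≠ u → w ≠ v → w ≠ u₀ ∧ w ≠ v₀) →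
      (∀ w : V, w ≠ u₀ → w ≠ v₀ → w ≠ u ∧ w ≠ v) → False := by
    intro u₀ v₀ h₀ hne₀ hf₀ hvals hvals'
    obtain ⟨s', hs⟩ := exists_between hinj HO hp h₀ hne₀ hf₀
    obtain ⟨t', ht⟩ := exists_outside hinj HO hp h₀ hne₀ hf₀
    have hs0 : s' ≠ u₀ := fun h => by subst h; exact lt_irrefl _ hs.1
    have hs1 : s' ≠ v₀ := fun h => by subst h; exact lt_irrefl _ hs.2
    have ht0 : t' ≠ u₀ := by
      rintro rfl
      rcases ht with h | h
      · exact lt_irrefl _ h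
      · exact lt_asymm hf₀ h
    have ht1 : t' ≠ v₀ := by
      rintro rfl
      rcases ht with h | h
      · exact lt_asymm hf₀ h
      · exact lt_irrefl _ h
    obtain ⟨hsu, hsv⟩ := hvals' s' hs0 hs1
    obtain ⟨htu, htv⟩ := hvals' t' ht0 ht1
    let σ : {w : {w : V // w ≠ v} // w ∈ {w : {w : V // w ≠ v} | w ≠ (⟨u, huv.ne⟩ : {w : V // w ≠ v})}} :=
      ⟨⟨s', hsv⟩, fun h => hsu (congrArg Subtype.val h)⟩
    let τ : {w : {w : V // w ≠ v} // w ∈ {w : {w : V // w ≠ v} | w ≠ (⟨u, huv.ne⟩ : {w : V // w ≠ v})}} :=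
      ⟨⟨t', htv⟩, fun h => htu (congrArg Subtype.val h)⟩
    obtain ⟨W⟩ := hcon.preconnected σ τ
    have := walk_stays hinj HO huv h₀ hf₀ hvals W hs
    rcases ht with h | h
    · exact lt_asymm h this.1
    · exact lt_asymm h this.2
  have hfne : f u ≠ f v := fun h => huv.ne (hinj h)
  rcases hfne.lt_or_gt with h | h
  · exact main u v huv hne h (fun w h1 h2 => ⟨h1, h2⟩) (fun w h1 h2 => ⟨h1, h2⟩)
  · exact main v u huv.symm (by rwa [Sym2.eq_swap]) h
      (fun w h1 h2 => ⟨h2, h1⟩) (fun w h1 h2 => ⟨h2, h1⟩)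

end Stmt18Aux

namespace Stmt18Aux
variable {V : Type u} [DecidableEq V] {G : SimpleGraph V}
open SimpleGraph Walk
set_option linter.unusedSectionVars false

def mkV {v : V} (G : SimpleGraph V) (u : V) (x : {w : V // w ≠ v}) (c : V) (h1 : c ≠ v) (h2 : c ≠ x.1) :
    {w : {w : V // w ≠ v} // w ∈ {w : {w : V // w ≠ v} | w ≠ x}} :=
  ⟨⟨c, h1⟩, fun h => h2 (congrArg Subtype.val h)⟩

lemma lift_walk {u v : V} {x : {w : V // w ≠ v}} {c d : V} (r : G.Walk c d)
    (h : ∀ z ∈ r.support, z ≠ v ∧ z ≠ x.1) :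
    ((contractEdge G u v).induce {w | w ≠ x}).Reachable
      (mkV G u x c (h c r.start_mem_support).1 (h c r.start_mem_support).2)
      (mkV G u x d (h d r.end_mem_support).1 (h d r.end_mem_support).2) := by
  induction r with
  | nil => exact Reachable.refl _
  | @cons c m d hadj r ih =>
    have hm : m ∈ (Walk.cons hadj r).support := by
      rw [support_cons]; exact List.mem_cons_of_mem _ r.start_mem_support
    have hc := h c (Walk.cons hadj r).start_mem_support
    have hm' := h m hm
    have hstep : ((contractEdge G u v).induce {w | w ≠ x}).Adj
        (mkV G u x c hc.1 hc.2) (mkV G u x m hm'.1 hm'.2) := by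
      show (contractEdge G u v).Adj ⟨c, hc.1⟩ ⟨m, hm'.1⟩
      exact ⟨hadj.ne, Or.inl hadj⟩
    exact (hstep.reachable).trans (ih (fun z hz => h z (by rw [support_cons]; exact List.mem_cons_of_mem _ hz)))

lemma closed_nodup_nil {z : V} (q : G.Walk z z) (h : q.support.Nodup) : q.Nil := by
  cases q with
  | nil => exact Walk.Nil.nil
  | cons hadj q' =>
    exfalso
    rw [support_cons, List.nodup_cons] at h
    exact h.1 q'.end_mem_support

end Stmt18Aux

namespace Stmt18Aux
variable {V : Type u} [DecidableEq V] [Fintype V] {G : SimpleGraph V}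
open SimpleGraph Walk
set_option linter.unusedSectionVars false

lemma partB {a : V} {p : G.Walk a a} (hp : p.IsHamiltonianCycle) {u v : V}
    (huv : G.Adj u v) (he : s(u, v) ∈ p.edges) (hcard : 4 ≤ Fintype.card V) :
    TwoConnected (contractEdge G u v) := by
  have hcards : Fintype.card {w : V // w ≠ v} = Fintype.card V - 1 := by
    have := Fintype.card_subtype_compl (fun w : V => w = v)
    simp only [Fintype.card_subtype_eq] at this
    exact this
  constructor
  · rw [Nat.card_eq_fintype_card, hcards]; omega
  · intro x
    have he' : s(v, u) ∈ p.edges := by rwa [Sym2.eq_swap] at he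
    obtain ⟨r, hnd, hcov⟩ := split hp he'
    -- r : G.Walk u v
    have hrev : ¬ r.reverse.Nil := not_nil_of_ne (fun h => huv.ne h.symm)
    obtain ⟨w, h2, r₂, heq⟩ := not_nil_iff.mp hrev
    have hrsupp : r.support.reverse = v :: r₂.support := by
      rw [← support_reverse, heq, support_cons]
    have hnd' : (v :: r₂.support).Nodup := by
      rw [← hrsupp]; exact List.nodup_reverse.mpr hnd
    have hr₂nd : r₂.support.Nodup := (List.nodup_cons.mp hnd').2
    have hvr₂ : v ∉ r₂.support := (List.nodup_cons.mp hnd').1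
    set P := r₂.reverse with hP
    have hPnd : P.support.Nodup := by rw [hP, support_reverse]; exact List.nodup_reverse.mpr hr₂nd
    have hPv : ∀ z ∈ P.support, z ≠ v := by
      intro z hz hzv; subst hzv
      rw [hP, support_reverse, List.mem_reverse] at hz
      exact hvr₂ hz
    have hPcov : ∀ z : V, z ≠ v → z ∈ P.support := by
      intro z hzv
      have : z ∈ r.support.reverse := by rw [List.mem_reverse]; exact hcov z
      rw [hrsupp, List.mem_cons] at this
      rcases this with h | h
      · exact absurd h hzv
      · rw [hP, support_reverse, List.mem_reverse]; exact h
    have hwv : G.Adj w v := h2.symm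
    have hz3 : ∃ z : V, z ≠ u ∧ z ≠ v := by
      have hne : (({u, v} : Finset V)ᶜ).Nonempty := by
        rw [← Finset.card_pos, Finset.card_compl]
        have hle : ({u, v} : Finset V).card ≤ 2 :=
          (Finset.card_insert_le _ _).trans (by simp)
        omega
      obtain ⟨z, hz⟩ := hne
      rw [Finset.mem_compl] at hz
      simp only [Finset.mem_insert, Finset.mem_singleton] at hz
      push_neg at hz
      exact ⟨z, hz.1, hz.2⟩
    have hwu : w ≠ u := by
      intro hweq
      obtain ⟨z, hzu, hzv⟩ := hz3
      have hzP := hPcov z hzv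
      subst hweq
      have hnil := closed_nodup_nil P hPnd
      have hsup : P.support = [w] := by
        cases hh : P with
        | nil => rfl
        | cons h q => rw [hh] at hnil; exact absurd hnil (by simp)
      rw [hsup, List.mem_singleton] at hzP
      exact hzu hzP
    -- P : G.Walk u w, covering V \ {v}
    rw [connected_iff]
    have hxv : (x : V) ≠ v := x.2
    constructor
    swap
    · -- Nonempty
      have h1 : 1 < Fintype.card {w : V // w ≠ v} := by rw [hcards]; omega
      obtain ⟨y, hy⟩ := Fintype.exists_ne_of_one_lt_card h1 x
      exact ⟨⟨y, hy⟩⟩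
    · -- Preconnected
      by_cases hxu : (x : V) = u
      · -- root w
        have hwx : w ≠ (x : V) := fun h => hwu (h.trans hxu)
        suffices hub : ∀ β, ((contractEdge G u v).induce {w | w ≠ x}).Reachable β
            (mkV G u x w hwv.ne hwx) by
          intro β γ; exact (hub β).trans (hub γ).symm
        intro β
        set b := (β.1 : V) with hb
        have hbv : b ≠ v := β.1.2
        have hbx : b ≠ (x : V) := fun h => β.2 (Subtype.ext h)
        have hbP : b ∈ P.support := hPcov b hbv
        have hcond : ∀ z ∈ (P.dropUntil b hbP).support, z ≠ v ∧ z ≠ (x : V) := by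
          intro z hz
          refine ⟨hPv z (support_dropUntil_subset P hbP hz), ?_⟩
          intro hzx
          subst hzx
          have hux : u ≠ b := fun h => hbx (h ▸ hxu).symm
          have hthis := start_not_mem_dropUntil P hPnd hbP hux
          rw [hxu] at hz
          exact hthis hz
        have hreach := lift_walk (u := u) (x := x) (P.dropUntil b hbP) hcond
        have hβ : β = mkV G u x b hbv hbx := Subtype.ext (Subtype.ext rfl)
        rw [hβ]
        exact hreach
      · -- root u
        have hune : u ≠ v := huv.ne
        have hux : u ≠ (x : V) := fun h => hxu h.symm
        suffices hub : ∀ β, ((contractEdge G u v).induce {w | w ≠ x}).Reachable β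
            (mkV G u x u hune hux) by
          intro β γ; exact (hub β).trans (hub γ).symm
        intro β
        set b := (β.1 : V) with hb
        have hbv : b ≠ v := β.1.2
        have hbx : b ≠ (x : V) := fun h => β.2 (Subtype.ext h)
        have hβ : β = mkV G u x b hbv hbx := Subtype.ext (Subtype.ext rfl)
        rw [hβ]
        by_cases hxw : (x : V) = w
        · -- use takeUntil within P
          have hbP : b ∈ P.support := hPcov b hbv
          have hcond : ∀ z ∈ (P.takeUntil b hbP).support, z ≠ v ∧ z ≠ (x : V) := by
            intro z hz
            refine ⟨hPv z (support_takeUntil_subset P hbP hz), ?_⟩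
            intro hzx
            subst hzx
            have hwb : w ≠ b := fun h => hbx ((h ▸ hxw : (x:V) = b)).symm
            have hthis := end_not_mem_takeUntil P hPnd hbP hwb
            rw [hxw] at hz
            exact hthis hz
          exact (lift_walk (u := u) (x := x) (P.takeUntil b hbP) hcond).symm
        · -- x is an interior vertex of P (or not on it at all is impossible)
          have hxP : (x : V) ∈ P.support := hPcov _ hxv
          by_cases hbu : b = u
          · subst hbu; exact Reachable.refl _
          · have hbP : b ∈ P.support := hPcov b hbv
            have hbsplit : b ∈ (P.takeUntil (x : V) hxP).support ∨
                b ∈ (P.dropUntil (x : V) hxP).support.tail := by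
              rw [support_split P hxP, List.mem_append] at hbP; exact hbP
            rcases hbsplit with hbA | hbB
            · set A := P.takeUntil (x : V) hxP with hA
              have hAnd : A.support.Nodup := takeUntil_support_nodup P hPnd hxP
              have hcond : ∀ z ∈ (A.takeUntil b hbA).support, z ≠ v ∧ z ≠ (x : V) := by
                intro z hz
                have hzA : z ∈ A.support := support_takeUntil_subset A hbA hz
                refine ⟨hPv z (support_takeUntil_subset P hxP hzA), ?_⟩
                intro hzx
                subst hzx
                exact end_not_mem_takeUntil A hAnd hbA (fun h => hbx h.symm) hz
              exact (lift_walk (u := u) (x := x) (A.takeUntil b hbA) hcond).symm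
            · set B := P.dropUntil (x : V) hxP with hB
              have hBnd : B.support.Nodup := dropUntil_support_nodup P hPnd hxP
              have hbB' : b ∈ B.support := by
                rw [support_eq_cons B]; exact List.mem_cons_of_mem _ hbB
              have hcond : ∀ z ∈ (B.dropUntil b hbB').support, z ≠ v ∧ z ≠ (x : V) := by
                intro z hz
                have hzB : z ∈ B.support := support_dropUntil_subset B hbB' hz
                refine ⟨hPv z (support_dropUntil_subset P hxP hzB), ?_⟩
                intro hzx
                subst hzx
                exact start_not_mem_dropUntil B hBnd hbB' (fun h => hbx h.symm) hz
              have hreach := lift_walk (u := u) (x := x) (B.dropUntil b hbB') hcond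
              -- from b to w, then edge w - u
              have hwx : w ≠ (x : V) := fun h => hxw h.symm
              have hstep : ((contractEdge G u v).induce {w | w ≠ x}).Adj
                  (mkV G u x w hwv.ne hwx) (mkV G u x u hune hux) := by
                show (contractEdge G u v).Adj ⟨w, hwv.ne⟩ ⟨u, hune⟩
                exact ⟨hwu, Or.inr (Or.inr ⟨rfl, hwv⟩)⟩
              exact hreach.trans hstep.reachable

end Stmt18Aux

namespace Stmt18Aux
variable {V : Type u} [DecidableEq V] [Fintype V] {G : SimpleGraph V}
open SimpleGraph Walk
set_option linter.unusedSectionVars false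

lemma card4 (h2 : TwoConnected G) (hK3 : ¬ Nonempty (G ≃g completeGraph (Fin 3))) :
    4 ≤ Fintype.card V := by
  have h3 : 3 ≤ Fintype.card V := by rw [← Nat.card_eq_fintype_card]; exact h2.1
  by_contra h4
  push_neg at h4
  have hc3 : Fintype.card V = 3 := by omega
  have hcomp : ∀ x y : V, x ≠ y → G.Adj x y := by
    intro x y hxy
    have hne : (({x, y} : Finset V)ᶜ).Nonempty := by
      rw [← Finset.card_pos, Finset.card_compl]
      have hle : ({x, y} : Finset V).card ≤ 2 :=
        (Finset.card_insert_le _ _).trans (by simp)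
      omega
    obtain ⟨z, hz⟩ := hne
    rw [Finset.mem_compl] at hz
    simp only [Finset.mem_insert, Finset.mem_singleton] at hz
    push_neg at hz
    obtain ⟨hzx, hzy⟩ := hz
    have huniv : (Finset.univ : Finset V) = {x, y, z} := by
      apply (Finset.eq_of_subset_of_card_le (Finset.subset_univ _) _).symm
      rw [Finset.card_univ, hc3]
      have e1 : ({x, y, z} : Finset V).card = 3 := by
        rw [Finset.card_insert_of_notMem (by simp [hxy, Ne.symm hzx]),
          Finset.card_insert_of_notMem (by simp [Ne.symm hzy]),
          Finset.card_singleton]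
      omega
    have hcon := h2.2 z
    have hx : x ∈ {u : V | u ≠ z} := hzx.symm
    have hy : y ∈ {u : V | u ≠ z} := hzy.symm
    obtain ⟨W⟩ := hcon.preconnected ⟨x, hx⟩ ⟨y, hy⟩
    -- first step of W
    have hWnil : ¬ W.Nil := by
      apply not_nil_of_ne
      intro hh
      exact hxy (congrArg Subtype.val hh)
    obtain ⟨m, hadj, W', hW⟩ := not_nil_iff.mp hWnil
    have hGadj : G.Adj x m.1 := hadj
    have hm3 : m.1 ∈ ({x, y, z} : Finset V) := by rw [← huniv]; exact Finset.mem_univ _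
    simp only [Finset.mem_insert, Finset.mem_singleton] at hm3
    rcases hm3 with h | h | h
    · exact absurd (h ▸ hGadj) (G.loopless.irrefl x)
    · exact h ▸ hGadj
    · exact absurd h m.2
  apply hK3
  have e := Fintype.equivFinOfCardEq hc3
  refine ⟨⟨e, ?_⟩⟩
  intro a b
  simp only [completeGraph, top_adj]
  constructor
  · intro h
    exact hcomp a b (fun hh => h (hh ▸ rfl))
  · intro h
    exact fun hh => h.ne (e.injective hh)

end Stmt18Aux

/-- In a finite 2-connected outerplanar graph `G` with Hamilton cycle
`p`, not isomorphic to `K³`, contracting any chord produces a cutvertex; hence the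
2-contractible edges of `G` are exactly the edges of the Hamilton cycle. -/
theorem stmt_18 {V : Type u} [Fintype V] [DecidableEq V] (G : SimpleGraph V) (ho : IsOuterplanar G)
    (h2 : TwoConnected G) (hK3 : ¬ Nonempty (G ≃g completeGraph (Fin 3)))
    (a : V) (p : G.Walk a a) (hp : p.IsHamiltonianCycle) :
    ∀ u v : V, G.Adj u v →
      (s(u, v) ∉ p.edges →
        ∃ x : {w : V // w ≠ v},
          ¬ ((contractEdge G u v).induce {w | w ≠ x}).Connected) ∧
      (s(u, v) ∈ p.edges ↔ TwoConnected (contractEdge G u v)) := by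
  obtain ⟨f, hinj, HO⟩ := ho
  intro u v huv
  have hcard : 4 ≤ Fintype.card V := Stmt18Aux.card4 h2 hK3
  constructor
  · intro hne
    exact ⟨⟨u, huv.ne⟩, Stmt18Aux.partA hinj HO hp huv hne⟩
  · constructor
    · intro he
      exact Stmt18Aux.partB hp huv he hcard
    · intro h2c
      by_contra hne
      exact (Stmt18Aux.partA hinj HO hp huv hne) (h2c.2 ⟨u, huv.ne⟩)
end
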